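/- arXiv:1912.04644 — 13 statements merged into one kernel-verified Lean document; each statement's English description precedes it below -/
import Mathlib

section
/- Let X be a real Hilbert space and let f : X → ℝ∪{+∞} be a function whose effective domain dom(f) is nonempty. Then f is Φ_lsc-convex on X if and only if f is lower semicontinuous on X and is minorized by some function from the class Φ_lsc (i.e. supp(f) ≠ ∅). -/
open scoped RealInnerProductSpace

noncomputable section

/-- The class `Φ_lsc` of continuous functions `x ↦ -a‖x‖² + ⟪v,x⟫ + c` with `a ≥ 0`. -/
def PhiLsc (X : Type*) [NormedAddCommGroup X] [InnerProductSpace ℝ X] : Set (X → ℝ) :=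
  {φ | ∃ a : ℝ, ∃ v : X, ∃ c : ℝ, 0 ≤ a ∧ ∀ x, φ x = -a * ‖x‖ ^ 2 + ⟪v, x⟫ + c}

/-- The support set `supp(f) = {φ ∈ Φ_lsc : φ ≤ f}` of `f : X → ℝ∪{+∞}`. -/
def PhiSupp {X : Type*} [NormedAddCommGroup X] [InnerProductSpace ℝ X] (f : X → EReal) :
    Set (X → ℝ) :=
  {φ | φ ∈ PhiLsc X ∧ ∀ x, (φ x : EReal) ≤ f x}

/-- The effective domain of `f`. -/
def PhiDom {X : Type*} (f : X → EReal) : Set X := {x | f x < ⊤}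

/-- `f` is `Φ_lsc`-convex: it is the pointwise supremum of its support set. -/
def PhiConvexOn {X : Type*} [NormedAddCommGroup X] [InnerProductSpace ℝ X] (f : X → EReal) :
    Prop :=
  ∀ x, f x = ⨆ φ ∈ PhiSupp f, (φ x : EReal)

/-- The set of `ε`-`Φ_lsc`-subgradients of `f` at `xb`:
pairs `(a,v)`, `a ≥ 0`, with `f x - f xb ≥ ⟪v, x - xb⟫ - a‖x‖² + a‖xb‖² - ε` for all `x`. -/
def SubLscE {X : Type*} [NormedAddCommGroup X] [InnerProductSpace ℝ X] (f : X → EReal)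
    (ε : ℝ) (xb : X) : Set (ℝ × X) :=
  {p | 0 ≤ p.1 ∧ ∀ x : X,
    f xb + ((⟪p.2, x - xb⟫ - p.1 * ‖x‖ ^ 2 + p.1 * ‖xb‖ ^ 2 - ε : ℝ) : EReal) ≤ f x}

/-- The set of local `Φ_lsc`-subgradients of `f` at `xb`. -/
def SubLscLoc {X : Type*} [NormedAddCommGroup X] [InnerProductSpace ℝ X] (f : X → EReal)
    (xb : X) : Set (ℝ × X) :=
  {p | 0 ≤ p.1 ∧ ∃ δ : ℝ, 0 < δ ∧ ∀ x : X, ‖x - xb‖ < δ →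
    f xb + ((⟪p.2, x - xb⟫ - p.1 * ‖x‖ ^ 2 + p.1 * ‖xb‖ ^ 2 : ℝ) : EReal) ≤ f x}

/-- `f` is paraconvex (with exponent 2). -/
def ParaconvexOn {X : Type*} [NormedAddCommGroup X] [InnerProductSpace ℝ X]
    (f : X → EReal) : Prop :=
  ∃ C : ℝ, 0 < C ∧ ∀ x y : X, ∀ t : ℝ, t ∈ Set.Icc (0 : ℝ) 1 →
    f (t • x + (1 - t) • y) ≤
      (t : EReal) * f x + ((1 - t : ℝ) : EReal) * f y + ((C * ‖x - y‖ ^ 2 : ℝ) : EReal)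

/-- The proximal subdifferential of `f` at `xb`. -/
def ProxSub {X : Type*} [NormedAddCommGroup X] [InnerProductSpace ℝ X] (f : X → EReal)
    (xb : X) : Set X :=
  {v | ∃ δ : ℝ, 0 < δ ∧ ∃ ρ : ℝ, 0 ≤ ρ ∧ ∀ x : X, ‖x - xb‖ < δ →
    f xb + ((⟪v, x - xb⟫ - ρ / 2 * ‖x - xb‖ ^ 2 : ℝ) : EReal) ≤ f x}

/-- The Dini subdifferential of `f` at `xb`. -/
def DiniSub {X : Type*} [NormedAddCommGroup X] [InnerProductSpace ℝ X] (f : X → EReal)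
    (xb : X) : Set X :=
  {w | ∀ h : X, ∀ t : ℕ → ℝ, ∀ u : ℕ → X, (∀ n, 0 < t n) →
    Filter.Tendsto t Filter.atTop (nhds 0) → Filter.Tendsto u Filter.atTop (nhds h) →
    ((⟪w, h⟫ : ℝ) : EReal) ≤
      Filter.liminf (fun n => (f (xb + t n • u n) - f xb) * (((t n)⁻¹ : ℝ) : EReal)) Filter.atTop}

/-- The `Φ_lsc`-subgradients of a real-valued `f` at `xb`. -/
def SubLscR {X : Type*} [NormedAddCommGroup X] [InnerProductSpace ℝ X] (f : X → ℝ)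
    (xb : X) : Set (ℝ × X) :=
  {p | 0 ≤ p.1 ∧ ∀ x : X,
    ⟪p.2, x - xb⟫ - p.1 * ‖x‖ ^ 2 + p.1 * ‖xb‖ ^ 2 ≤ f x - f xb}

private lemma phiSupp_exists {X : Type*} [NormedAddCommGroup X] [InnerProductSpace ℝ X]
    (f : X → EReal) (hf : LowerSemicontinuous f) (φ₀ : X → ℝ) (hφ₀ : φ₀ ∈ PhiSupp f)
    (xb : X) (r : ℝ) (hr : (r : EReal) < f xb) :
    ∃ φ ∈ PhiSupp f, φ xb = r := by
  obtain ⟨⟨a₀, v₀, c₀, ha₀, hφ₀eq⟩, hφ₀le⟩ := hφ₀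
  obtain ⟨δ, hδ, hball⟩ := Metric.eventually_nhds_iff.mp (hf xb (r : EReal) hr)
  set w : X := v₀ - (2 * a₀) • xb with hw
  set C : ℝ := φ₀ xb with hC
  set k : ℝ := a₀ + ‖w‖ / δ + |C - r| / δ ^ 2 with hk
  have hk0 : 0 ≤ k := by positivity
  refine ⟨fun x => -k * ‖x‖ ^ 2 + ⟪(2 * k) • xb, x⟫ + (r - k * ‖xb‖ ^ 2),
    ⟨⟨k, (2 * k) • xb, r - k * ‖xb‖ ^ 2, hk0, fun x => rfl⟩, ?_⟩, ?_⟩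
  · intro x
    have hφeq : -k * ‖x‖ ^ 2 + ⟪(2 * k) • xb, x⟫ + (r - k * ‖xb‖ ^ 2)
        = r - k * ‖x - xb‖ ^ 2 := by
      rw [norm_sub_sq_real, real_inner_smul_left, real_inner_comm xb x]; ring
    show ((-k * ‖x‖ ^ 2 + ⟪(2 * k) • xb, x⟫ + (r - k * ‖xb‖ ^ 2) : ℝ) : EReal) ≤ f x
    rw [hφeq]
    by_cases hx : dist x xb < δ
    · refine le_trans ?_ (le_of_lt (hball hx))
      have : r - k * ‖x - xb‖ ^ 2 ≤ r := by nlinarith [sq_nonneg ‖x - xb‖]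
      exact_mod_cast this
    · push_neg at hx
      rw [dist_eq_norm] at hx
      refine le_trans ?_ (hφ₀le x)
      have hident : φ₀ x = C - a₀ * ‖x - xb‖ ^ 2 + ⟪w, x - xb⟫ := by
        have hw1 : ⟪w, x - xb⟫ = ⟪v₀, x⟫ - ⟪v₀, xb⟫ - 2 * a₀ * ⟪xb, x⟫ + 2 * a₀ * ‖xb‖ ^ 2 := by
          rw [hw, inner_sub_left, real_inner_smul_left, inner_sub_right, inner_sub_right,
            real_inner_self_eq_norm_sq]
          ring
        rw [hφ₀eq x, hC, hφ₀eq xb, hw1, norm_sub_sq_real, real_inner_comm x xb]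
        ring
      set t : ℝ := ‖x - xb‖ with ht
      have hin : -(‖w‖ * t) ≤ ⟪w, x - xb⟫ := by
        have h := abs_real_inner_le_norm w (x - xb)
        have h2 := neg_abs_le (⟪w, x - xb⟫ : ℝ)
        rw [← ht] at h
        linarith
      have hreal : r - k * t ^ 2 ≤ φ₀ x := by
        rw [hident, hk]
        have e1 : ‖w‖ / δ * δ = ‖w‖ := div_mul_cancel₀ _ hδ.ne'
        have e2 : |C - r| / δ ^ 2 * δ ^ 2 = |C - r| := div_mul_cancel₀ _ (by positivity)
        have habs : r - C ≤ |C - r| := by rw [abs_sub_comm]; exact le_abs_self _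
        have h1 : 0 ≤ ‖w‖ / δ * (t * (t - δ)) := by
          apply mul_nonneg (by positivity)
          exact mul_nonneg (by rw [ht]; exact norm_nonneg _) (by linarith)
        have h2 : 0 ≤ |C - r| / δ ^ 2 * (t ^ 2 - δ ^ 2) := by
          apply mul_nonneg (by positivity)
          nlinarith
        have h1' : ‖w‖ * t ≤ ‖w‖ / δ * t ^ 2 := by
          have heq : ‖w‖ / δ * (t * (t - δ)) = ‖w‖ / δ * t ^ 2 - ‖w‖ / δ * δ * t := by ring
          rw [heq, e1] at h1; linarith
        have h2' : |C - r| ≤ |C - r| / δ ^ 2 * t ^ 2 := by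
          have heq : |C - r| / δ ^ 2 * (t ^ 2 - δ ^ 2)
              = |C - r| / δ ^ 2 * t ^ 2 - |C - r| / δ ^ 2 * δ ^ 2 := by ring
          rw [heq, e2] at h2; linarith
        linarith [hin, h1', h2', habs]
      exact_mod_cast hreal
  · show -k * ‖xb‖ ^ 2 + ⟪(2 * k) • xb, xb⟫ + (r - k * ‖xb‖ ^ 2) = r
    rw [real_inner_smul_left, real_inner_self_eq_norm_sq]; ring

/-- a function with nonempty effective domain is `Φ_lsc`-convex iff it is
lower semicontinuous and minorized by a function from `Φ_lsc`. -/
theorem stmt_0 {X : Type*} [NormedAddCommGroup X] [InnerProductSpace ℝ X] [CompleteSpace X]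
    (f : X → EReal) (hbot : ∀ x, f x ≠ ⊥) (hdom : (PhiDom f).Nonempty) :
    PhiConvexOn f ↔ LowerSemicontinuous f ∧ (PhiSupp f).Nonempty := by
  constructor
  · intro hconv
    constructor
    · have hfe : f = fun x => ⨆ φ ∈ PhiSupp f, ((φ x : ℝ) : EReal) := funext hconv
      rw [hfe]
      apply lowerSemicontinuous_iSup
      intro φ
      apply lowerSemicontinuous_iSup
      intro hφ
      obtain ⟨⟨a, v, c, ha, heq⟩, _⟩ := hφ
      have hcont : Continuous φ := by
        have hφe : φ = fun x => -a * ‖x‖ ^ 2 + ⟪v, x⟫ + c := funext heq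
        rw [hφe]
        exact ((continuous_const.mul (continuous_norm.pow 2)).add
          (continuous_const.inner continuous_id)).add continuous_const
      exact (continuous_coe_real_ereal.comp hcont).lowerSemicontinuous
    · by_contra hemp
      rw [Set.not_nonempty_iff_eq_empty] at hemp
      obtain ⟨x0, _⟩ := hdom
      have h0 := hconv x0
      rw [hemp] at h0
      simp at h0
      exact hbot x0 h0
  · rintro ⟨hlsc, φ₀, hφ₀⟩
    intro x
    apply le_antisymm
    · apply le_of_forall_lt
      intro c hc
      obtain ⟨r, hcr, hrf⟩ := EReal.exists_between_coe_real hc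
      obtain ⟨φ, hφ, hφx⟩ := phiSupp_exists f hlsc φ₀ hφ₀ x r hrf
      refine lt_of_lt_of_le hcr ?_
      rw [← hφx]
      exact le_iSup₂_of_le φ hφ le_rfl
    · exact iSup₂_le fun φ hφ => hφ.2 x
end
end

section
/- Let X be a real Hilbert space and let f : X → ℝ∪{+∞} be a proper lower semicontinuous function. If f is paraconvex on X then f is Φ_lsc-convex on X. -/
open scoped RealInnerProductSpace

noncomputable section

open Filter Topology

lemma convex_of_isClosed_of_midpoint {E : Type*} [NormedAddCommGroup E] [NormedSpace ℝ E]
    {S : Set E} (hS : IsClosed S)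
    (hmid : ∀ p ∈ S, ∀ q ∈ S, (2⁻¹ : ℝ) • p + (2⁻¹ : ℝ) • q ∈ S) : Convex ℝ S := by
  intro p hp q hq a b ha hb hab
  set c : ℝ → E := fun t => t • p + (1 - t) • q with hc
  have hccont : Continuous c := by fun_prop
  set T : Set ℝ := c ⁻¹' S with hT
  have hTclosed : IsClosed T := hS.preimage hccont
  have h0 : (0 : ℝ) ∈ T := by simp [hT, hc, hq]
  have h1 : (1 : ℝ) ∈ T := by simp [hT, hc, hp]
  have hmidT : ∀ s ∈ T, ∀ t ∈ T, (s + t) / 2 ∈ T := by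
    intro s hs t ht
    have key : c ((s + t) / 2) = (2⁻¹ : ℝ) • c s + (2⁻¹ : ℝ) • c t := by
      simp only [hc]
      module
    simp only [hT, Set.mem_preimage] at *
    rw [key]
    exact hmid _ hs _ ht
  have dyadic : ∀ n : ℕ, ∀ k : ℕ, k ≤ 2 ^ n → ((k : ℝ) / 2 ^ n) ∈ T := by
    intro n
    induction n with
    | zero =>
      intro k hk
      interval_cases k
      · simpa using h0
      · simpa using h1
    | succ n ih =>
      intro k hk
      rcases Nat.even_or_odd k with ⟨j, hj⟩ | ⟨j, hj⟩
      · have hj' : j ≤ 2 ^ n := by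
          subst hj; rw [pow_succ] at hk; omega
        have : ((k : ℝ) / 2 ^ (n + 1)) = (j : ℝ) / 2 ^ n := by
          subst hj; push_cast; ring
        rw [this]; exact ih j hj'
      · have hj1 : j ≤ 2 ^ n := by
          subst hj; rw [pow_succ] at hk; omega
        have hj2 : j + 1 ≤ 2 ^ n := by
          subst hj; rw [pow_succ] at hk; omega
        have : ((k : ℝ) / 2 ^ (n + 1)) = ((j : ℝ) / 2 ^ n + ((j : ℕ) + 1 : ℝ) / 2 ^ n) / 2 := by
          subst hj; push_cast; ring
        rw [this]
        exact hmidT _ (ih j hj1) _ (by exact_mod_cast ih (j + 1) (by exact_mod_cast hj2))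
  have haT : a ∈ T := by
    set s : ℕ → ℝ := fun n => (⌊a * 2 ^ n⌋₊ : ℝ) / 2 ^ n with hs
    have hmem : ∀ n, s n ∈ T := by
      intro n
      apply dyadic
      have h2n : a * 2 ^ n ≤ ((2 ^ n : ℕ) : ℝ) := by
        push_cast
        nlinarith [pow_pos (by norm_num : (0:ℝ) < 2) n]
      calc ⌊a * 2 ^ n⌋₊ ≤ ⌊((2 ^ n : ℕ) : ℝ)⌋₊ := Nat.floor_le_floor h2n
        _ = 2 ^ n := Nat.floor_natCast _
    have htend : Tendsto s atTop (𝓝 a) := by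
      have hz : Tendsto (fun n => s n - a) atTop (𝓝 0) := by
        apply squeeze_zero_norm (a := fun n => (2⁻¹ : ℝ) ^ n)
        · intro n
          have h2n : (0:ℝ) < 2 ^ n := by positivity
          have hfl : (⌊a * 2 ^ n⌋₊ : ℝ) ≤ a * 2 ^ n := Nat.floor_le (by positivity)
          have hfl2 : a * 2 ^ n < (⌊a * 2 ^ n⌋₊ : ℝ) + 1 := Nat.lt_floor_add_one _
          have hpow : (2⁻¹ : ℝ) ^ n * 2 ^ n = 1 := by
            rw [← mul_pow]; norm_num
          rw [Real.norm_eq_abs, abs_le]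
          have hle : (⌊a * 2 ^ n⌋₊ : ℝ) / 2 ^ n ≤ a := by
            rw [div_le_iff₀ h2n]; linarith
          have hge : a - (2⁻¹ : ℝ) ^ n ≤ (⌊a * 2 ^ n⌋₊ : ℝ) / 2 ^ n := by
            rw [le_div_iff₀ h2n]; nlinarith
          constructor
          · simp only [hs]; linarith
          · simp only [hs]
            have : (0:ℝ) ≤ (2⁻¹ : ℝ) ^ n := by positivity
            linarith
        · exact tendsto_pow_atTop_nhds_zero_of_lt_one (by norm_num) (by norm_num)
      have := hz.add_const a
      simpa using this
    exact hTclosed.mem_of_tendsto htend (Filter.Eventually.of_forall hmem)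
  have hb' : b = 1 - a := by linarith
  rw [hb']
  exact haT

lemma isClosed_epi {X : Type*} [NormedAddCommGroup X] [InnerProductSpace ℝ X]
    (f : X → EReal) (hlsc : LowerSemicontinuous f) (K : ℝ) :
    IsClosed {p : X × ℝ | f p.1 ≤ ((p.2 - K * ‖p.1‖ ^ 2 : ℝ) : EReal)} := by
  rw [← isOpen_compl_iff, isOpen_iff_mem_nhds]
  intro p hp
  have hp' : ((p.2 - K * ‖p.1‖ ^ 2 : ℝ) : EReal) < f p.1 := not_le.1 hp
  obtain ⟨q, hq1, hq2⟩ := EReal.lt_iff_exists_real_btwn.1 hp'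
  have h1 : ∀ᶠ z : X × ℝ in 𝓝 p, (q : EReal) < f z.1 :=
    (continuous_fst.tendsto p).eventually (hlsc p.1 q hq2)
  have hcont : Continuous fun z : X × ℝ => z.2 - K * ‖z.1‖ ^ 2 := by fun_prop
  have h2 : ∀ᶠ z : X × ℝ in 𝓝 p, z.2 - K * ‖z.1‖ ^ 2 < q :=
    (hcont.tendsto p).eventually_lt_const (by exact_mod_cast hq1)
  filter_upwards [h1, h2] with z hz1 hz2
  simp only [Set.mem_compl_iff, Set.mem_setOf_eq, not_le]
  exact lt_trans (by exact_mod_cast hz2) hz1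

/-- a proper lower semicontinuous paraconvex function is `Φ_lsc`-convex. -/
theorem stmt_1 {X : Type*} [NormedAddCommGroup X] [InnerProductSpace ℝ X] [CompleteSpace X]
    (f : X → EReal) (hbot : ∀ x, f x ≠ ⊥)
    (hsupp : (PhiSupp f).Nonempty) (hdom : (PhiDom f).Nonempty)
    (hlsc : LowerSemicontinuous f) (hpara : ParaconvexOn f) :
    PhiConvexOn f := by
  obtain ⟨C, hC, hpc⟩ := hpara
  obtain ⟨φ0, ⟨a₀, v₀, c₀, ha₀, hφ0⟩, hφ0le⟩ := hsupp
  set K : ℝ := max (4 * C) a₀ with hKdef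
  have hK4 : 4 * C ≤ K := le_max_left _ _
  have hKa : a₀ ≤ K := le_max_right _ _
  have hK0 : 0 ≤ K := le_trans ha₀ hKa
  set S : Set (X × ℝ) := {p : X × ℝ | f p.1 ≤ ((p.2 - K * ‖p.1‖ ^ 2 : ℝ) : EReal)} with hSdef
  have hSclosed : IsClosed S := isClosed_epi f hlsc K
  -- auxiliary: real representation of f on points of S
  have hrep : ∀ p : X × ℝ, p ∈ S → f p.1 = (((f p.1).toReal : ℝ) : EReal) ∧
      (f p.1).toReal ≤ p.2 - K * ‖p.1‖ ^ 2 := by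
    intro p hp
    have hne : f p.1 ≠ ⊤ := (lt_of_le_of_lt hp (EReal.coe_lt_top _)).ne
    have heq : f p.1 = (((f p.1).toReal : ℝ) : EReal) := (EReal.coe_toReal hne (hbot _)).symm
    refine ⟨heq, ?_⟩
    have hple : f p.1 ≤ ((p.2 - K * ‖p.1‖ ^ 2 : ℝ) : EReal) := hp
    rw [heq] at hple
    exact_mod_cast hple
  have hSmid : ∀ p ∈ S, ∀ q ∈ S, (2⁻¹ : ℝ) • p + (2⁻¹ : ℝ) • q ∈ S := by
    intro p hp q hq
    obtain ⟨hfxeq, hfxle⟩ := hrep p hp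
    obtain ⟨hfyeq, hfyle⟩ := hrep q hq
    have hm := hpc p.1 q.1 (2⁻¹ : ℝ) (by constructor <;> norm_num)
    rw [hfxeq, hfyeq] at hm
    have h12 : (1 - 2⁻¹ : ℝ) = (2⁻¹ : ℝ) := by norm_num
    rw [h12] at hm
    show f ((2⁻¹ : ℝ) • p.1 + (2⁻¹ : ℝ) • q.1) ≤
      (((2⁻¹ * p.2 + 2⁻¹ * q.2 : ℝ) - K * ‖(2⁻¹ : ℝ) • p.1 + (2⁻¹ : ℝ) • q.1‖ ^ 2 : ℝ) : EReal)
    refine le_trans hm ?_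
    have hcast : (((2⁻¹ : ℝ)) : EReal) * (((f p.1).toReal : ℝ) : EReal)
        + (((2⁻¹ : ℝ)) : EReal) * (((f q.1).toReal : ℝ) : EReal)
        + ((C * ‖p.1 - q.1‖ ^ 2 : ℝ) : EReal)
        = ((2⁻¹ * (f p.1).toReal + 2⁻¹ * (f q.1).toReal + C * ‖p.1 - q.1‖ ^ 2 : ℝ) : EReal) := by
      norm_cast
    rw [hcast]
    rw [EReal.coe_le_coe_iff]
    have hnorm : ‖(2⁻¹ : ℝ) • p.1 + (2⁻¹ : ℝ) • q.1‖ = 2⁻¹ * ‖p.1 + q.1‖ := by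
      rw [← smul_add, norm_smul]
      simp
    have hpar := parallelogram_law_with_norm ℝ p.1 q.1
    rw [hnorm]
    have hsq : (2⁻¹ * ‖p.1 + q.1‖) ^ 2 = 4⁻¹ * (‖p.1 + q.1‖ * ‖p.1 + q.1‖) := by ring
    rw [hsq]
    nlinarith [sq_nonneg ‖p.1 - q.1‖, norm_nonneg (p.1 - q.1)]
  have hSconv : Convex ℝ S := convex_of_isClosed_of_midpoint hSclosed hSmid
  have hmemS : ∀ x : X, f x ≠ ⊤ → ((x, (f x).toReal + K * ‖x‖ ^ 2) ∈ S) := by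
    intro x hx
    show f x ≤ (((f x).toReal + K * ‖x‖ ^ 2 - K * ‖x‖ ^ 2 : ℝ) : EReal)
    rw [show ((f x).toReal + K * ‖x‖ ^ 2 - K * ‖x‖ ^ 2 : ℝ) = (f x).toReal by ring]
    exact (EReal.coe_toReal hx (hbot x)).symm.le
  -- key claim
  have key : ∀ x0 : X, ∀ r : ℝ, (r : EReal) < f x0 →
      ∃ φ ∈ PhiSupp f, (r : EReal) < ((φ x0 : ℝ) : EReal) := by
    intro x0 r hr
    have hx0 : ((x0, r + K * ‖x0‖ ^ 2) : X × ℝ) ∉ S := by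
      intro h
      have h' : f x0 ≤ ((r + K * ‖x0‖ ^ 2 - K * ‖x0‖ ^ 2 : ℝ) : EReal) := h
      rw [show (r + K * ‖x0‖ ^ 2 - K * ‖x0‖ ^ 2 : ℝ) = r by ring] at h'
      exact absurd h' (not_le.2 hr)
    obtain ⟨L, u, hLx0, hLS⟩ := geometric_hahn_banach_point_closed hSconv hSclosed hx0
    set w : X := (InnerProductSpace.toDual ℝ X).symm
      (L.comp (ContinuousLinearMap.inl ℝ X ℝ)) with hwdef
    set β : ℝ := L (0, 1) with hβdef
    have hLval : ∀ x : X, ∀ μ : ℝ, L (x, μ) = ⟪w, x⟫ + μ * β := by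
      intro x μ
      have h1 : ((x, μ) : X × ℝ) = (x, 0) + μ • ((0 : X), (1 : ℝ)) := by
        simp [Prod.ext_iff]
      rw [h1, map_add, map_smul]
      have h2 : ⟪w, x⟫ = L (x, 0) := by
        rw [hwdef, InnerProductSpace.toDual_symm_apply]
        rfl
      rw [h2, smul_eq_mul, hβdef]
    have hβ0 : 0 ≤ β := by
      by_contra hneg
      push_neg at hneg
      obtain ⟨x1, hx1⟩ := hdom
      have hx1' : f x1 ≠ ⊤ := hx1.ne
      set μ1 : ℝ := (f x1).toReal + K * ‖x1‖ ^ 2 with hμ1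
      have hn : ∀ n : ℕ, u < ⟪w, x1⟫ + (μ1 + n) * β := by
        intro n
        have hmem' : ((x1, μ1 + n) : X × ℝ) ∈ S := by
          show f x1 ≤ ((μ1 + n - K * ‖x1‖ ^ 2 : ℝ) : EReal)
          have heq : f x1 = (((f x1).toReal : ℝ) : EReal) := (EReal.coe_toReal hx1' (hbot x1)).symm
          rw [heq]
          have : (f x1).toReal ≤ μ1 + n - K * ‖x1‖ ^ 2 := by
            have : (0:ℝ) ≤ n := Nat.cast_nonneg n
            rw [hμ1]; linarith
          exact_mod_cast this
        have := hLS _ hmem'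
        rwa [hLval] at this
      obtain ⟨n, hn'⟩ := exists_nat_gt ((u - ⟪w, x1⟫ - μ1 * β) / β)
      have hnb : (n : ℝ) * β < u - ⟪w, x1⟫ - μ1 * β := by
        have := (div_lt_iff_of_neg hneg).1 hn'
        linarith
      have := hn n
      nlinarith
    rcases lt_or_eq_of_le hβ0 with hβ | hβeq
    · -- β > 0
      refine ⟨fun x => -K * ‖x‖ ^ 2 + ⟪-(β⁻¹) • w, x⟫ + u / β,
        ⟨⟨K, -(β⁻¹) • w, u / β, hK0, fun x => rfl⟩, ?_⟩, ?_⟩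
      · intro x
        by_cases hx : f x = ⊤
        · rw [hx]; exact le_top
        · have hmem' := hLS _ (hmemS x hx)
          rw [hLval] at hmem'
          have heq : f x = (((f x).toReal : ℝ) : EReal) := (EReal.coe_toReal hx (hbot x)).symm
          rw [heq, EReal.coe_le_coe_iff]
          show -K * ‖x‖ ^ 2 + ⟪-(β⁻¹) • w, x⟫ + u / β ≤ (f x).toReal
          rw [real_inner_smul_left]
          have h2 : (u - ⟪w, x⟫) / β ≤ (f x).toReal + K * ‖x‖ ^ 2 :=
            (div_le_iff₀ hβ).2 (by nlinarith)
          have h3 : -(β⁻¹) * ⟪w, x⟫ + u / β = (u - ⟪w, x⟫) / β := by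
            field_simp; ring
          linarith
      · rw [hLval] at hLx0
        rw [EReal.coe_lt_coe_iff]
        show r < -K * ‖x0‖ ^ 2 + ⟪-(β⁻¹) • w, x0⟫ + u / β
        rw [real_inner_smul_left]
        have h2 : r + K * ‖x0‖ ^ 2 < (u - ⟪w, x0⟫) / β := (lt_div_iff₀ hβ).2 (by nlinarith)
        have h3 : -(β⁻¹) * ⟪w, x0⟫ + u / β = (u - ⟪w, x0⟫) / β := by
          field_simp; ring
        linarith
    · -- β = 0
      have hβz : β = 0 := hβeq.symm
      have hdomlt : ∀ x : X, f x ≠ ⊤ → u < ⟪w, x⟫ := by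
        intro x hx
        have := hLS _ (hmemS x hx)
        rwa [hLval, hβz, mul_zero, add_zero] at this
      have hx0lt : ⟪w, x0⟫ < u := by
        have := hLx0
        rwa [hLval, hβz, mul_zero, add_zero] at this
      set B : ℝ := -K * ‖x0‖ ^ 2 + ⟪v₀, x0⟫ + c₀ with hBdef
      set gap : ℝ := u - ⟪w, x0⟫ with hgapdef
      have hgap : 0 < gap := by rw [hgapdef]; linarith
      set n : ℝ := (max 0 (r - B) + 1) / gap with hndef
      have hn0 : 0 ≤ n := div_nonneg (by positivity) hgap.le
      have hngap : n * gap = max 0 (r - B) + 1 := by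
        rw [hndef]; field_simp
      refine ⟨fun x => -K * ‖x‖ ^ 2 + ⟪v₀ - n • w, x⟫ + (c₀ + n * u),
        ⟨⟨K, v₀ - n • w, c₀ + n * u, hK0, fun x => rfl⟩, ?_⟩, ?_⟩
      · intro x
        by_cases hx : f x = ⊤
        · rw [hx]; exact le_top
        · refine le_trans ?_ (hφ0le x)
          have hux := hdomlt x hx
          rw [hφ0 x]
          have hreal : -K * ‖x‖ ^ 2 + ⟪v₀ - n • w, x⟫ + (c₀ + n * u)
              ≤ -a₀ * ‖x‖ ^ 2 + ⟪v₀, x⟫ + c₀ := by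
            rw [inner_sub_left, real_inner_smul_left]
            have h1 : n * u ≤ n * ⟪w, x⟫ := mul_le_mul_of_nonneg_left hux.le hn0
            nlinarith [sq_nonneg ‖x‖]
          exact_mod_cast hreal
      · rw [EReal.coe_lt_coe_iff]
        show r < -K * ‖x0‖ ^ 2 + ⟪v₀ - n • w, x0⟫ + (c₀ + n * u)
        rw [inner_sub_left, real_inner_smul_left]
        have h1 : r - B < n * gap := by
          have := le_max_right 0 (r - B)
          rw [hngap]; linarith
        rw [hgapdef] at h1
        rw [hBdef] at h1
        linarith
  -- conclusion
  intro x
  apply le_antisymm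
  · by_contra hcon
    push_neg at hcon
    obtain ⟨r, hr1, hr2⟩ := EReal.lt_iff_exists_real_btwn.1 hcon
    obtain ⟨φ, hφ, hrφ⟩ := key x r hr2
    have hle : ((φ x : ℝ) : EReal) ≤ ⨆ φ ∈ PhiSupp f, ((φ x : ℝ) : EReal) :=
      le_iSup₂ (f := fun (φ : X → ℝ) (_ : φ ∈ PhiSupp f) => ((φ x : ℝ) : EReal)) φ hφ
    exact absurd (lt_of_lt_of_le hrφ hle) (not_lt.2 hr1.le)
  · exact iSup₂_le fun φ hφ => hφ.2 x
end
end

section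
/- Let X be a real Hilbert space, let f : X → ℝ∪{+∞} be a proper Φ_lsc-convex function and let x̄ ∈ dom(f). If there exist ρ ≥ 0 and δ > 0 such that f(x) ≥ f(x̄) − ρ‖x − x̄‖² for all x with ‖x − x̄‖ < δ, then there exists ρ̄ ≥ 0 such that f(x) ≥ f(x̄) − ρ̄‖x − x̄‖² for all x ∈ X. -/
open scoped RealInnerProductSpace

noncomputable section

/-!
Take any `φ ∈ supp(f)`. Expanded around `x̄` it reads `φ x = φ x̄ + ⟪w, x - x̄⟫ - a‖x - x̄‖²`, and for
`‖x - x̄‖ ≥ δ` both the linear term and the gap `f x̄ - φ x̄ ≥ 0` are dominated by multiples of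
`‖x - x̄‖²`. This gives a quadratic minorant of `f` centred at `(x̄, f x̄)` outside the ball of
radius `δ`; inside it the local one holds, and the larger of the two curvatures works everywhere.
-/

lemma mul_le_div_mul_sq_of_le {c δ r : ℝ} (hc : 0 ≤ c) (hδ : 0 < δ) (hr : δ ≤ r) :
    c * r ≤ c / δ * r ^ 2 := by
  have hr1 : 1 ≤ r / δ := (one_le_div hδ).2 hr
  calc c * r = c * r * 1 := (mul_one _).symm
    _ ≤ c * r * (r / δ) := by gcongr; exact mul_nonneg hc (hδ.le.trans hr)
    _ = c / δ * r ^ 2 := by ring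

lemma le_div_sq_mul_sq_of_le {c δ r : ℝ} (hc : 0 ≤ c) (hδ : 0 < δ) (hr : δ ≤ r) :
    c ≤ c / δ ^ 2 * r ^ 2 := by
  have hr1 : 1 ≤ (r / δ) ^ 2 := one_le_pow₀ ((one_le_div hδ).2 hr)
  calc c = c * 1 := (mul_one _).symm
    _ ≤ c * (r / δ) ^ 2 := by gcongr
    _ = c / δ ^ 2 * r ^ 2 := by ring

section PhiLsc

variable {X : Type*} [NormedAddCommGroup X] [InnerProductSpace ℝ X] {φ : X → ℝ}

lemma PhiLsc.exists_eq_around (hφ : φ ∈ PhiLsc X) (xb : X) :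
    ∃ a : ℝ, 0 ≤ a ∧ ∃ w : X, ∀ x, φ x = φ xb + ⟪w, x - xb⟫ - a * ‖x - xb‖ ^ 2 := by
  obtain ⟨a, v, c, ha, hφ⟩ := hφ
  refine ⟨a, ha, v - (2 * a) • xb, fun x => ?_⟩
  rw [hφ x, hφ xb, norm_sub_sq_real, inner_sub_left, inner_sub_right, inner_sub_right,
    real_inner_smul_left, real_inner_smul_left, real_inner_self_eq_norm_sq, real_inner_comm x xb]
  ring

lemma PhiLsc.exists_sq_minorant_outside_ball (hφ : φ ∈ PhiLsc X) {xb : X} {M δ : ℝ}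
    (hM : φ xb ≤ M) (hδ : 0 < δ) :
    ∃ κ : ℝ, 0 ≤ κ ∧ ∀ x, δ ≤ ‖x - xb‖ → M - κ * ‖x - xb‖ ^ 2 ≤ φ x := by
  obtain ⟨a, ha, w, hφ⟩ := PhiLsc.exists_eq_around hφ xb
  have hgap : 0 ≤ M - φ xb := sub_nonneg.2 hM
  refine ⟨a + ‖w‖ / δ + (M - φ xb) / δ ^ 2, by positivity, fun x hx => ?_⟩
  have hlin : -(‖w‖ * ‖x - xb‖) ≤ ⟪w, x - xb⟫ :=
    neg_le_of_abs_le (abs_real_inner_le_norm w (x - xb))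
  have hlin_sq := mul_le_div_mul_sq_of_le (norm_nonneg w) hδ hx
  have hgap_sq := le_div_sq_mul_sq_of_le hgap hδ hx
  rw [hφ x]
  linarith

end PhiLsc

theorem stmt_2_general {X : Type*} [NormedAddCommGroup X] [InnerProductSpace ℝ X]
    (f : X → EReal)
    (hsupp : (PhiSupp f).Nonempty)
    (xb : X) (hxb : xb ∈ PhiDom f)
    (ρ δ : ℝ) (hδ : 0 < δ)
    (hloc : ∀ x : X, ‖x - xb‖ < δ → f xb + ((-(ρ * ‖x - xb‖ ^ 2) : ℝ) : EReal) ≤ f x) :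
    ∃ ρ' : ℝ, 0 ≤ ρ' ∧ ∀ x : X, f xb + ((-(ρ' * ‖x - xb‖ ^ 2) : ℝ) : EReal) ≤ f x := by
  obtain ⟨φ, hφ, hφf⟩ := hsupp
  have hfxb : f xb = ((f xb).toReal : EReal) :=
    (EReal.coe_toReal hxb.ne (ne_bot_of_le_ne_bot (EReal.coe_ne_bot _) (hφf xb))).symm
  have hφM : φ xb ≤ (f xb).toReal := by
    have := hφf xb
    rwa [hfxb, EReal.coe_le_coe_iff] at this
  obtain ⟨κ, hκ, hout⟩ := PhiLsc.exists_sq_minorant_outside_ball hφ hφM hδ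
  refine ⟨max ρ κ, hκ.trans (le_max_right ρ κ), fun x => ?_⟩
  rcases lt_or_ge ‖x - xb‖ δ with hnear | hfar
  · refine le_trans ?_ (hloc x hnear)
    gcongr
    exact le_max_left ρ κ
  · refine le_trans ?_ (hφf x)
    rw [hfxb, ← EReal.coe_add, EReal.coe_le_coe_iff]
    have hsq : 0 ≤ ‖x - xb‖ ^ 2 := by positivity
    linarith [hout x hfar, mul_le_mul_of_nonneg_right (le_max_right ρ κ) hsq]

/-- a local quadratic minorant `f(x) ≥ f(xb) - ρ‖x-xb‖²` near `xb` of a proper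
`Φ_lsc`-convex function extends to a global one. -/
theorem stmt_2 {X : Type*} [NormedAddCommGroup X] [InnerProductSpace ℝ X] [CompleteSpace X]
    (f : X → EReal) (hbot : ∀ x, f x ≠ ⊥)
    (hsupp : (PhiSupp f).Nonempty) (hdom : (PhiDom f).Nonempty)
    (hconv : PhiConvexOn f) (xb : X) (hxb : xb ∈ PhiDom f)
    (ρ δ : ℝ) (hρ : 0 ≤ ρ) (hδ : 0 < δ)
    (hloc : ∀ x : X, ‖x - xb‖ < δ → f xb + ((-(ρ * ‖x - xb‖ ^ 2) : ℝ) : EReal) ≤ f x) :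
    ∃ ρ' : ℝ, 0 ≤ ρ' ∧ ∀ x : X, f xb + ((-(ρ' * ‖x - xb‖ ^ 2) : ℝ) : EReal) ≤ f x :=
  stmt_2_general f hsupp xb hxb ρ δ hδ hloc
end
end

section
/- Let X be a real Hilbert space, let f : X → ℝ∪{+∞} be a proper Φ_lsc-convex function and let x̄ ∈ dom(f). If (a,v) is a local Φ_lsc-subgradient of f at x̄, then there exists ā ≥ 0 such that the pair (ā, v − 2a·x̄ + 2ā·x̄) is a Φ_lsc-subgradient of f at x̄, i.e. (ā, v − 2a·x̄ + 2ā·x̄) ∈ ∂_lsc f(x̄). -/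
open scoped RealInnerProductSpace

noncomputable section

section Aux

variable {X : Type*} [NormedAddCommGroup X] [InnerProductSpace ℝ X]

lemma shift_id (α : ℝ) (u xb x : X) :
    ⟪u, x - xb⟫ - α * ‖x‖ ^ 2 + α * ‖xb‖ ^ 2
      = ⟪u - (2 * α) • xb, x - xb⟫ - α * ‖x - xb‖ ^ 2 := by
  simp only [inner_sub_left, inner_sub_right, real_inner_smul_left,
    ← real_inner_self_eq_norm_sq]
  rw [real_inner_comm x xb]
  ring

lemma quad_bound (b B Cc a' δ r : ℝ) (hb : 0 ≤ b) (hB : 0 ≤ B) (hC : 0 ≤ Cc)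
    (hδ : 0 < δ) (hr : δ ≤ r) (ha' : b + B / δ + Cc / δ ^ 2 ≤ a') :
    b * r ^ 2 + B * r + Cc ≤ a' * r ^ 2 := by
  have hδ2 : (0:ℝ) < δ ^ 2 := by positivity
  have hr0 : 0 < r := lt_of_lt_of_le hδ hr
  have h1 : B * r ≤ B / δ * r ^ 2 := by
    rw [div_mul_eq_mul_div, le_div_iff₀ hδ]
    nlinarith [mul_le_mul_of_nonneg_left hr (mul_nonneg hB hr0.le)]
  have h2 : Cc ≤ Cc / δ ^ 2 * r ^ 2 := by
    rw [div_mul_eq_mul_div, le_div_iff₀ hδ2]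
    nlinarith [mul_le_mul hr hr hδ.le hr0.le]
  nlinarith [mul_le_mul_of_nonneg_right ha' (sq_nonneg r)]

end Aux

/-- globalization of local `Φ_lsc`-subgradients; if `(a,v)` is a local
`Φ_lsc`-subgradient of `f` at `xb`, then `(a', v - 2a•xb + 2a'•xb)` is a (global)
`Φ_lsc`-subgradient for some `a' ≥ 0`. -/
theorem stmt_3 {X : Type*} [NormedAddCommGroup X] [InnerProductSpace ℝ X] [CompleteSpace X]
    (f : X → EReal) (hbot : ∀ x, f x ≠ ⊥)
    (hsupp : (PhiSupp f).Nonempty) (hdom : (PhiDom f).Nonempty)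
    (hconv : PhiConvexOn f) (xb : X) (hxb : xb ∈ PhiDom f)
    (a : ℝ) (v : X) (hloc : (a, v) ∈ SubLscLoc f xb) :
    ∃ a' : ℝ, 0 ≤ a' ∧ (a', v - (2 * a) • xb + (2 * a') • xb) ∈ SubLscE f 0 xb := by
  obtain ⟨φ, ⟨b, u, c, hb, hφ⟩, hφle⟩ := hsupp
  obtain ⟨ha, δ, hδ, hlocal⟩ := hloc
  have hxbtop : f xb ≠ ⊤ := ne_of_lt hxb
  set F : ℝ := (f xb).toReal with hF
  have hfxb : f xb = (F : EReal) := (EReal.coe_toReal hxbtop (hbot xb)).symm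
  set w : X := v - (2 * a) • xb with hw
  set B : ℝ := ‖w‖ + 2 * b * ‖xb‖ + ‖u‖ with hB
  set Cc : ℝ := b * ‖xb‖ ^ 2 + ‖u‖ * ‖xb‖ + |c| + |F| with hCc
  have hBpos : 0 ≤ B := by positivity
  have hCpos : 0 ≤ Cc := by positivity
  set a' : ℝ := max a (b + B / δ + Cc / δ ^ 2) with ha'
  have ha'0 : 0 ≤ a' := le_trans ha (le_max_left _ _)
  refine ⟨a', ha'0, ha'0, fun x => ?_⟩
  -- reduce goal to a real inequality about w
  have hgoalq : (⟪v - (2 * a) • xb + (2 * a') • xb, x - xb⟫ - a' * ‖x‖ ^ 2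
      + a' * ‖xb‖ ^ 2 - 0 : ℝ) = ⟪w, x - xb⟫ - a' * ‖x - xb‖ ^ 2 := by
    have := shift_id a' (v - (2 * a) • xb + (2 * a') • xb) xb x
    rw [sub_zero, this]
    congr 2
    rw [hw]; abel
  rcases eq_or_ne (f x) ⊤ with htop | htop
  · rw [htop]; exact le_top
  set G : ℝ := (f x).toReal with hG
  have hfx : f x = (G : EReal) := (EReal.coe_toReal htop (hbot x)).symm
  rw [hfxb, hfx, hgoalq, ← EReal.coe_add, EReal.coe_le_coe_iff]
  set r : ℝ := ‖x - xb‖ with hr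
  have hr0 : 0 ≤ r := norm_nonneg _
  rcases lt_or_ge r δ with hlt | hge
  · -- local case
    have h := hlocal x hlt
    rw [hfxb, hfx, show (⟪v, x - xb⟫ - a * ‖x‖ ^ 2 + a * ‖xb‖ ^ 2 : ℝ)
        = ⟪w, x - xb⟫ - a * ‖x - xb‖ ^ 2 from shift_id a v xb x,
      ← EReal.coe_add, EReal.coe_le_coe_iff] at h
    have haa' : a ≤ a' := le_max_left _ _
    nlinarith [sq_nonneg r]
  · -- global case, via the minorant φ
    have hm : (φ x : EReal) ≤ f x := hφle x
    rw [hfx, EReal.coe_le_coe_iff, hφ x] at hm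
    have hFle : F ≤ |F| := le_abs_self F
    have hcle : -c ≤ |c| := neg_le_abs c
    have h1 : ⟪w, x - xb⟫ ≤ ‖w‖ * r := real_inner_le_norm w (x - xb)
    have h2 : -⟪u, x⟫ ≤ ‖u‖ * ‖x‖ := by
      have := abs_real_inner_le_norm u x
      rw [abs_le] at this
      linarith [this.1]
    have h3 : ‖x‖ ≤ ‖xb‖ + r := by
      calc ‖x‖ = ‖xb + (x - xb)‖ := by rw [add_sub_cancel]
        _ ≤ ‖xb‖ + ‖x - xb‖ := norm_add_le _ _
    have hq := quad_bound b B Cc a' δ r hb hBpos hCpos hδ hge (le_max_right _ _)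
    have hnx : 0 ≤ ‖x‖ := norm_nonneg _
    -- F + ⟪w,x-xb⟫ - a' r² ≤ -b‖x‖² + ⟪u,x⟫ + c ≤ G
    have key : F + (⟪w, x - xb⟫ - a' * r ^ 2) ≤ -b * ‖x‖ ^ 2 + ⟪u, x⟫ + c := by
      nlinarith [mul_le_mul_of_nonneg_left (mul_le_mul h3 h3 hnx (by positivity)) hb,
        mul_le_mul_of_nonneg_left h3 (norm_nonneg u)]
    linarith
end
end

section
/- Let X be a real Hilbert space and let f : X → ℝ∪{+∞} be a proper Φ_lsc-convex function. Then for every ε > 0 and every x̄ ∈ dom(f), the set ∂^ε_lsc f(x̄) of ε-Φ_lsc-subgradients of f at x̄ is nonempty. -/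
open scoped RealInnerProductSpace

noncomputable section

/-- a proper `Φ_lsc`-convex function has a nonempty set of
`ε`-`Φ_lsc`-subgradients at every point of its domain, for every `ε > 0`. -/
theorem stmt_4 {X : Type*} [NormedAddCommGroup X] [InnerProductSpace ℝ X] [CompleteSpace X]
    (f : X → EReal) (hbot : ∀ x, f x ≠ ⊥)
    (hsupp : (PhiSupp f).Nonempty) (hdom : (PhiDom f).Nonempty)
    (hconv : PhiConvexOn f) :
    ∀ ε : ℝ, 0 < ε → ∀ xb ∈ PhiDom f, (SubLscE f ε xb).Nonempty := by
  intro ε hε xb hxb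
  have hne : f xb ≠ ⊤ := ne_of_lt hxb
  set r := (f xb).toReal with hr
  have hfr : f xb = (r : EReal) := (EReal.coe_toReal hne (hbot xb)).symm
  have hlt : ((r - ε : ℝ) : EReal) < f xb := by
    rw [hfr]; exact_mod_cast sub_lt_self r hε
  rw [hconv xb] at hlt
  simp only [lt_iSup_iff] at hlt
  obtain ⟨φ, hmem, hφlt⟩ := hlt
  obtain ⟨⟨a, v, c, ha, hφ⟩, hle⟩ := hmem
  have hφxb : r - ε < φ xb := by exact_mod_cast hφlt
  refine ⟨⟨a, v⟩, ha, fun x => ?_⟩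
  rw [hfr, ← EReal.coe_add]
  refine le_trans ?_ (hle x)
  apply EReal.coe_le_coe_iff.mpr
  have h1 := hφ x
  have h2 := hφ xb
  rw [inner_sub_right] at *
  simp only []
  linarith
end
end

section
/- Let X be a real Hilbert space and let f : X → ℝ∪{+∞} be a proper lower semicontinuous paraconvex function. Then for every x in the interior of dom(f), the set ∂_lsc f(x) is nonempty. -/
/-
Paraconvexity with constant `C` makes `g = f + 4C‖·‖²` midpoint convex: by the parallelogram law
`‖(x + y)/2‖² = (‖x‖² + ‖y‖²)/2 - ‖x - y‖²/4`, and the last term absorbs `C‖x - y‖²`.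
On a ball inside `dom f`, Baire's theorem applied to the closed sublevel sets of `f` bounds `g`
above near some point; reflecting through the centre moves the bound to the centre, and a
midpoint convex function bounded above on a ball is convex, hence continuous there.
Separating `(xb, g xb)` from the open strict epigraph (Hahn–Banach) gives `v` such that
`g - ⟪v, ·⟫` has a local minimum at `xb`, and midpoint convexity makes it a global one,
which is exactly the `Φ_lsc`-subgradient inequality for `(4C, v)`.
-/

open scoped RealInnerProductSpace

noncomputable section

open Metric Set Filter Topology

section ConvexAnalysis

variable {E : Type*} [NormedAddCommGroup E] [NormedSpace ℝ E] {s : Set E} {F : E → ℝ}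

lemma le_midpoint_bound_of_ball_le (hmid : ∀ x ∈ s, ∀ y ∈ s, F (midpoint ℝ x y) ≤ (F x + F y) / 2)
    {y u : E} {ρ M : ℝ} (hball : ball y ρ ⊆ s) (hM : ∀ z ∈ ball y ρ, F z ≤ M) (hu : u ∈ s) :
    ∀ z ∈ ball (midpoint ℝ y u) (ρ / 2), F z ≤ (M + F u) / 2 := by
  intro z hz
  set w := Equiv.pointReflection z u
  have hw : w ∈ ball y ρ := by
    rw [mem_ball, dist_eq_norm]
    rw [mem_ball, dist_eq_norm] at hz
    have : w - y = (2 : ℝ) • (z - midpoint ℝ y u) := by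
      simp only [w, Equiv.pointReflection_apply, vsub_eq_sub, vadd_eq_add, midpoint_eq_smul_add,
        invOf_eq_inv]
      module
    rw [this, norm_smul, Real.norm_two]
    linarith
  calc F z = F (midpoint ℝ w u) := by rw [midpoint_pointReflection_left]
    _ ≤ (F w + F u) / 2 := hmid w (hball hw) u hu
    _ ≤ (M + F u) / 2 := by linarith [hM w hw]

lemma nonpos_of_midpoint_le_of_le {φ : ℝ → ℝ} {D : ℝ} (h0 : φ 0 ≤ 0) (h1 : φ 1 ≤ 0)
    (hmid : ∀ s ∈ Icc (0 : ℝ) 1, ∀ t ∈ Icc (0 : ℝ) 1, φ ((s + t) / 2) ≤ (φ s + φ t) / 2)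
    (hD : ∀ t ∈ Icc (0 : ℝ) 1, φ t ≤ D) : ∀ t ∈ Icc (0 : ℝ) 1, φ t ≤ 0 := by
  -- `φ t` is at most half of `φ` at `2t` or at `2t - 1`, so the bound `D` halves at each step
  have hhalve : ∀ n : ℕ, ∀ t ∈ Icc (0 : ℝ) 1, φ t ≤ D / 2 ^ n := by
    intro n
    induction n with
    | zero => simpa using hD
    | succ n ih =>
      intro t ⟨ht0, ht1⟩
      rw [pow_succ, ← div_div]
      rcases le_total t (1 / 2) with h | h
      · have := hmid 0 ⟨le_rfl, zero_le_one⟩ (2 * t) ⟨by linarith, by linarith⟩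
        rw [show (0 + 2 * t) / 2 = t by ring] at this
        linarith [ih (2 * t) ⟨by linarith, by linarith⟩]
      · have := hmid (2 * t - 1) ⟨by linarith, by linarith⟩ 1 ⟨zero_le_one, le_rfl⟩
        rw [show (2 * t - 1 + 1) / 2 = t by ring] at this
        linarith [ih (2 * t - 1) ⟨by linarith, by linarith⟩]
  intro t ht
  exact ge_of_tendsto' (tendsto_const_nhds.div_atTop
    (tendsto_pow_atTop_atTop_of_one_lt one_lt_two)) fun n => hhalve n t ht

lemma convexOn_of_midpoint_le_of_le (hs : Convex ℝ s) {M : ℝ} (hM : ∀ x ∈ s, F x ≤ M)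
    (hmid : ∀ x ∈ s, ∀ y ∈ s, F (midpoint ℝ x y) ≤ (F x + F y) / 2) : ConvexOn ℝ s F := by
  refine ⟨hs, fun x hx y hy a b ha hb hab => ?_⟩
  set φ : ℝ → ℝ := fun t => F ((1 - t) • x + t • y) - ((1 - t) * F x + t * F y)
  have hseg : ∀ t ∈ Icc (0 : ℝ) 1, (1 - t) • x + t • y ∈ s :=
    fun t ht => hs hx hy (by linarith [ht.2]) ht.1 (by ring)
  have hφ := nonpos_of_midpoint_le_of_le (φ := φ) (D := M + |F x| + |F y|)
    (by simp [φ]) (by simp [φ])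
    (fun t₁ ht₁ t₂ ht₂ => by
      have h := hmid _ (hseg t₁ ht₁) _ (hseg t₂ ht₂)
      rw [show midpoint ℝ ((1 - t₁) • x + t₁ • y) ((1 - t₂) • x + t₂ • y)
          = (1 - (t₁ + t₂) / 2) • x + ((t₁ + t₂) / 2) • y by
        rw [midpoint_eq_smul_add, invOf_eq_inv]; module] at h
      simp only [φ]
      linarith)
    (fun t ht => by
      have := hM _ (hseg t ht)
      simp only [φ]
      nlinarith [abs_nonneg (F x), abs_nonneg (F y), neg_abs_le (F x), neg_abs_le (F y),
        ht.1, ht.2])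
    b ⟨hb, by linarith⟩
  obtain rfl : a = 1 - b := by linarith
  simp only [φ, smul_eq_mul] at hφ ⊢
  linarith

lemma ConvexOn.exists_le_add_clm (hF : ConvexOn ℝ s F) (hs : IsOpen s) (hc : ContinuousOn F s)
    {x : E} (hx : x ∈ s) : ∃ ℓ : E →L[ℝ] ℝ, ∀ y ∈ s, F x + ℓ (y - x) ≤ F y := by
  set U : Set (E × ℝ) := {p | p.1 ∈ s ∧ F p.1 < p.2}
  have hUopen : IsOpen U := by
    have := ((hc.comp continuousOn_fst fun p hp => hp).sub continuousOn_snd).isOpen_inter_preimage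
      (hs.preimage continuous_fst) isOpen_Iio (t := Iio 0)
    convert this using 1
    ext p
    exact and_congr_right' sub_neg.symm
  obtain ⟨ℓ, hℓ⟩ := geometric_hahn_banach_open_point hF.convex_strict_epigraph hUopen
    (fun h => lt_irrefl _ h.2 : (x, F x) ∉ U)
  set L : E →L[ℝ] ℝ := ℓ.comp (ContinuousLinearMap.inl ℝ E ℝ)
  set β := ℓ (0, 1)
  have hℓ_apply : ∀ y r, ℓ (y, r) = L y + r * β := fun y r => by
    rw [show ((y, r) : E × ℝ) = (y, 0) + r • (0, 1) by simp, map_add, map_smul, smul_eq_mul]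
    rfl
  have hβ : β < 0 := by
    have := hℓ (x, F x + 1) ⟨hx, lt_add_one _⟩
    rw [hℓ_apply, hℓ_apply] at this
    linarith
  refine ⟨(-β)⁻¹ • L, fun y hy => le_of_forall_gt_imp_ge_of_dense fun r hr => ?_⟩
  have := hℓ (y, r) ⟨hy, hr⟩
  rw [hℓ_apply, hℓ_apply] at this
  rw [smul_apply, map_sub, smul_eq_mul, ← le_sub_iff_add_le',
    inv_mul_le_iff₀ (neg_pos.2 hβ)]
  nlinarith

lemma exists_ball_convexOn_continuousOn_of_midpoint_le {xb y : E} {r ρ M : ℝ}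
    (hmid : ∀ x ∈ ball xb r, ∀ z ∈ ball xb r, F (midpoint ℝ x z) ≤ (F x + F z) / 2)
    (hρ : 0 < ρ) (hy : ball y ρ ⊆ ball xb r) (hM : ∀ z ∈ ball y ρ, F z ≤ M) :
    ∃ δ > 0, ConvexOn ℝ (ball xb δ) F ∧ ContinuousOn F (ball xb δ) := by
  have hyr : y ∈ ball xb r := hy (mem_ball_self hρ)
  set u := Equiv.pointReflection xb y
  have hu : u ∈ ball xb r := by
    rwa [mem_ball, dist_pointReflection_left, dist_comm]
  have hbound := le_midpoint_bound_of_ball_le hmid hy hM hu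
  rw [midpoint_pointReflection_right] at hbound
  set δ := min r (ρ / 2)
  have hδ : 0 < δ := lt_min (pos_of_mem_ball hyr) (half_pos hρ)
  have hboundδ : ∀ z ∈ ball xb δ, F z ≤ (M + F u) / 2 :=
    fun z hz => hbound z (ball_subset_ball (min_le_right _ _) hz)
  have hconv : ConvexOn ℝ (ball xb δ) F :=
    convexOn_of_midpoint_le_of_le (convex_ball xb δ) hboundδ
      (fun x hx z hz => hmid x (ball_subset_ball (min_le_left _ _) hx) z
        (ball_subset_ball (min_le_left _ _) hz))
  have hbdd : (𝓝 xb).IsBoundedUnder (· ≤ ·) F := isBoundedUnder_of_eventually_le <|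
    eventually_nhds_iff_ball.2 ⟨δ, hδ, hboundδ⟩
  exact ⟨δ, hδ, hconv, ((hconv.continuousOn_tfae isOpen_ball ⟨xb, mem_ball_self hδ⟩).out 3 1).1
    (by exact ⟨xb, mem_ball_self hδ, hbdd⟩)⟩

end ConvexAnalysis

lemma LowerSemicontinuous.exists_eventually_le_of_lt_top {X : Type*} [TopologicalSpace X]
    [BaireSpace X] {f : X → EReal} (hf : LowerSemicontinuous f) {U : Set X} (hU : IsOpen U)
    (hne : U.Nonempty) (hfin : ∀ x ∈ U, f x < ⊤) : ∃ y ∈ U, ∃ M : ℝ, ∀ᶠ x in 𝓝 y, f x ≤ M := by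
  set A : ℕ → Set X := fun n => f ⁻¹' Iic ((n : ℝ) : EReal) ∪ Uᶜ
  have hA : ∀ n, IsClosed (A n) := fun n => (hf.isClosed_preimage _).union hU.isClosed_compl
  have hcover : ⋃ n, A n = univ := eq_univ_of_forall fun x => by
    by_cases hx : x ∈ U
    · obtain ⟨r, hr, -⟩ := EReal.lt_iff_exists_real_btwn.1 (hfin x hx)
      obtain ⟨n, hn⟩ := exists_nat_ge r
      exact mem_iUnion.2 ⟨n, .inl (hr.le.trans (EReal.coe_le_coe_iff.2 hn))⟩
    · exact mem_iUnion.2 ⟨0, .inr hx⟩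
  obtain ⟨y, hyU, hy⟩ := (dense_iUnion_interior_of_closed hA hcover).inter_open_nonempty U hU hne
  obtain ⟨n, hn⟩ := mem_iUnion.1 hy
  refine ⟨y, hyU, n, ?_⟩
  filter_upwards [isOpen_interior.mem_nhds hn, hU.mem_nhds hyU] with x hxA hxU
  exact (interior_subset hxA).resolve_right (not_not.2 hxU)

/-- Midpoint convexity of an extended-real function, phrased through real upper bounds so that
no arithmetic in `EReal` is needed. -/
def IsMidpointConvex {E : Type*} [AddCommGroup E] [Module ℝ E] (g : E → EReal) : Prop :=
  ∀ x y : E, ∀ px py : ℝ, g x ≤ px → g y ≤ py → g (midpoint ℝ x y) ≤ ((px + py) / 2 : ℝ)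

lemma IsMidpointConvex.le_of_isLocalMin {E : Type*} [NormedAddCommGroup E] [NormedSpace ℝ E]
    {g : E → EReal} (hg : IsMidpointConvex g) {xb : E} (htop : g xb ≠ ⊤)
    (hmin : IsLocalMin g xb) (x : E) : g xb ≤ g x := by
  by_cases hbot : g xb = ⊥
  · simp [hbot]
  set c := (g xb).toReal
  have hc : g xb = c := (EReal.coe_toReal htop hbot).symm
  by_contra! hlt
  obtain ⟨p, hxp, hpc⟩ := EReal.lt_iff_exists_real_btwn.1 (hc ▸ hlt)
  rw [EReal.coe_lt_coe_iff] at hpc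
  -- along `xₙ = xb + 2⁻ⁿ (x - xb)`, halving gives `g xₙ ≤ c + 2⁻ⁿ (p - c) < c`
  set seq : ℕ → E := fun n => xb + ((1 / 2 : ℝ) ^ n) • (x - xb)
  have hseq : ∀ n, g (seq n) ≤ ((c + (1 / 2 : ℝ) ^ n * (p - c) : ℝ) : EReal) := by
    intro n
    induction n with
    | zero => simpa [seq] using hxp.le
    | succ n ih =>
      have h := hg xb (seq n) c _ hc.le ih
      rw [show midpoint ℝ xb (seq n) = seq (n + 1) by
        simp only [seq, midpoint_eq_smul_add, invOf_eq_inv, pow_succ]; module] at h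
      exact h.trans_eq (by congr 1; ring)
  have hlim : Tendsto seq atTop (𝓝 xb) := by
    have hpow :=
      tendsto_pow_atTop_nhds_zero_of_lt_one (r := (1 / 2 : ℝ)) (by norm_num) (by norm_num)
    simpa [seq] using tendsto_const_nhds.add (hpow.smul_const (x - xb))
  obtain ⟨n, hn⟩ := (hlim.eventually hmin).exists
  have := hn.trans (hseq n)
  rw [hc, EReal.coe_le_coe_iff] at this
  nlinarith [pow_pos (by norm_num : (0 : ℝ) < 1 / 2) n]

/-- `f + a‖·‖² - ⟪v, ·⟫`: a global minimum at `xb` is the same as `(a, v)` being a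
`Φ_lsc`-subgradient of `f` at `xb`. -/
def quadTilt {X : Type*} [NormedAddCommGroup X] [InnerProductSpace ℝ X] (f : X → EReal)
    (a : ℝ) (v : X) (x : X) : EReal :=
  f x + ((a * ‖x‖ ^ 2 - ⟪v, x⟫ : ℝ) : EReal)

section Tilt

variable {X : Type*} [NormedAddCommGroup X] [InnerProductSpace ℝ X] {f : X → EReal}

lemma norm_midpoint_sq (x y : X) :
    ‖midpoint ℝ x y‖ ^ 2 = (‖x‖ ^ 2 + ‖y‖ ^ 2) / 2 - ‖x - y‖ ^ 2 / 4 := by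
  have h := parallelogram_law_with_norm ℝ x y
  rw [midpoint_eq_smul_add, norm_smul, invOf_eq_inv, norm_inv, Real.norm_two]
  linarith [mul_pow (2 : ℝ)⁻¹ ‖x + y‖ 2]

lemma inner_midpoint (v x y : X) : ⟪v, midpoint ℝ x y⟫ = (⟪v, x⟫ + ⟪v, y⟫) / 2 := by
  rw [midpoint_eq_smul_add, invOf_eq_inv, inner_smul_right, inner_add_right]
  ring

lemma ParaconvexOn.exists_isMidpointConvex_quadTilt (hf : ParaconvexOn f) :
    ∃ a : ℝ, 0 ≤ a ∧ ∀ v : X, IsMidpointConvex (quadTilt f a v) := by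
  obtain ⟨C, hC, hpara⟩ := hf
  refine ⟨4 * C, by positivity, fun v x y px py hx hy => ?_⟩
  set q : X → ℝ := fun z => 4 * C * ‖z‖ ^ 2 - ⟪v, z⟫
  have hbound : ∀ z (p : ℝ), quadTilt f (4 * C) v z ≤ p → f z ≤ ((p - q z : ℝ) : EReal) :=
    fun z p h => by
      rw [EReal.coe_sub]
      exact (EReal.le_sub_iff_add_le (.inl (EReal.coe_ne_bot _)) (.inl (EReal.coe_ne_top _))).2 h
  have hmid : f (midpoint ℝ x y) ≤
      (((px - q x) / 2 + (py - q y) / 2 + C * ‖x - y‖ ^ 2 : ℝ) : EReal) := by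
    have h := hpara x y (1 / 2) ⟨by norm_num, by norm_num⟩
    rw [show (1 / 2 : ℝ) • x + (1 - 1 / 2 : ℝ) • y = midpoint ℝ x y by
      rw [midpoint_eq_smul_add, invOf_eq_inv]; module] at h
    refine h.trans ?_
    calc ((1 / 2 : ℝ) : EReal) * f x + ((1 - 1 / 2 : ℝ) : EReal) * f y
          + ((C * ‖x - y‖ ^ 2 : ℝ) : EReal)
        ≤ ((1 / 2 : ℝ) : EReal) * ((px - q x : ℝ) : EReal)
          + ((1 - 1 / 2 : ℝ) : EReal) * ((py - q y : ℝ) : EReal)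
          + ((C * ‖x - y‖ ^ 2 : ℝ) : EReal) := by
          gcongr
          · exact hbound x px hx
          · exact hbound y py hy
      _ = _ := by norm_cast; ring_nf
  calc quadTilt f (4 * C) v (midpoint ℝ x y)
      ≤ (((px - q x) / 2 + (py - q y) / 2 + C * ‖x - y‖ ^ 2 + q (midpoint ℝ x y) : ℝ) : EReal) := by
        rw [EReal.coe_add]; exact add_le_add_left hmid _
    _ ≤ ((px + py) / 2 : ℝ) := by
        rw [EReal.coe_le_coe_iff]
        simp only [q, norm_midpoint_sq, inner_midpoint]
        nlinarith [sq_nonneg ‖x - y‖]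

lemma quadTilt_eq_coe {x : X} (hx : f x ≠ ⊤) (hx' : f x ≠ ⊥) (a : ℝ) (v : X) :
    quadTilt f a v x = (((f x).toReal + a * ‖x‖ ^ 2 - ⟪v, x⟫ : ℝ) : EReal) := by
  rw [quadTilt, add_sub_assoc, EReal.coe_add, EReal.coe_toReal hx hx']

lemma mem_subLscE_zero_of_quadTilt_le {a : ℝ} {v xb : X} (ha : 0 ≤ a)
    (hmin : ∀ x, quadTilt f a v xb ≤ quadTilt f a v x) : (a, v) ∈ SubLscE f 0 xb := by
  refine ⟨ha, fun x => ?_⟩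
  set q : X → ℝ := fun z => a * ‖z‖ ^ 2 - ⟪v, z⟫
  calc f xb + ((⟪v, x - xb⟫ - a * ‖x‖ ^ 2 + a * ‖xb‖ ^ 2 - 0 : ℝ) : EReal)
      = f xb + (q xb : EReal) + ((-q x : ℝ) : EReal) := by
        rw [add_assoc, ← EReal.coe_add, inner_sub_right]; congr 2; ring
    _ ≤ f x + (q x : EReal) + ((-q x : ℝ) : EReal) := add_le_add (hmin x) le_rfl
    _ = f x := by rw [add_assoc, ← EReal.coe_add, add_neg_cancel, EReal.coe_zero, add_zero]

end Tilt

lemma exists_isLocalMin_quadTilt {X : Type*} [NormedAddCommGroup X] [InnerProductSpace ℝ X]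
    [CompleteSpace X] {f : X → EReal} (hbot : ∀ x, f x ≠ ⊥) (hlsc : LowerSemicontinuous f)
    {a : ℝ} (ha : 0 ≤ a) (hmid : IsMidpointConvex (quadTilt f a 0)) {xb : X}
    (hxb : xb ∈ interior (PhiDom f)) : ∃ v : X, IsLocalMin (quadTilt f a v) xb := by
  obtain ⟨r, hr, hB⟩ := Metric.isOpen_iff.1 isOpen_interior xb hxb
  have hfin : ∀ x ∈ ball xb r, f x ≠ ⊤ := fun x hx => (interior_subset (hB hx)).ne
  set F : X → ℝ := fun x => (f x).toReal + a * ‖x‖ ^ 2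
  have hF : ∀ x ∈ ball xb r, ∀ v, quadTilt f a v x = ((F x - ⟪v, x⟫ : ℝ) : EReal) :=
    fun x hx v => quadTilt_eq_coe (hfin x hx) (hbot x) a v
  have hFmid : ∀ x ∈ ball xb r, ∀ y ∈ ball xb r, F (midpoint ℝ x y) ≤ (F x + F y) / 2 := by
    intro x hx y hy
    have h := hmid x y (F x) (F y) (by simp [hF x hx]) (by simp [hF y hy])
    rwa [hF _ ((convex_ball xb r).midpoint_mem hx hy), EReal.coe_le_coe_iff, inner_zero_left,
      sub_zero] at h
  obtain ⟨y, hy, M, hM⟩ := hlsc.exists_eventually_le_of_lt_top isOpen_ball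
    ⟨xb, mem_ball_self hr⟩ fun x hx => (hfin x hx).lt_top
  obtain ⟨ρ, hρ, hρy⟩ := eventually_nhds_iff_ball.1 <| hM.and <|
    (isOpen_ball.eventually_mem hy).and <|
      (continuous_norm.tendsto y).eventually (gt_mem_nhds (lt_add_one ‖y‖))
  have hFy : ∀ z ∈ ball y ρ, F z ≤ M + a * (‖y‖ + 1) ^ 2 := fun z hz => by
    obtain ⟨hfz, -, hz1⟩ := hρy z hz
    have := EReal.toReal_le_toReal hfz (hbot z) (EReal.coe_ne_top M)
    rw [EReal.toReal_coe] at this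
    have : ‖z‖ ^ 2 ≤ (‖y‖ + 1) ^ 2 := by gcongr
    simp only [F]
    nlinarith
  obtain ⟨δ, hδ, hconv, hcont⟩ := exists_ball_convexOn_continuousOn_of_midpoint_le hFmid hρ
    (fun z hz => (hρy z hz).2.1) hFy
  obtain ⟨ℓ, hℓ⟩ := hconv.exists_le_add_clm isOpen_ball hcont (mem_ball_self hδ)
  refine ⟨(InnerProductSpace.toDual ℝ X).symm ℓ, ?_⟩
  filter_upwards [ball_mem_nhds xb (lt_min hr hδ)] with x hx
  rw [hF xb (mem_ball_self hr), hF x (ball_subset_ball (min_le_left _ _) hx),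
    EReal.coe_le_coe_iff, InnerProductSpace.toDual_symm_apply,
    InnerProductSpace.toDual_symm_apply]
  linarith [hℓ x (ball_subset_ball (min_le_right _ _) hx), map_sub ℓ x xb]

theorem stmt_7_general {X : Type*} [NormedAddCommGroup X] [InnerProductSpace ℝ X] [CompleteSpace X]
    (f : X → EReal) (hbot : ∀ x, f x ≠ ⊥)
    (hlsc : LowerSemicontinuous f) (hpara : ParaconvexOn f) :
    ∀ x ∈ interior (PhiDom f), (SubLscE f 0 x).Nonempty := by
  intro xb hxb
  obtain ⟨a, ha, hmid⟩ := hpara.exists_isMidpointConvex_quadTilt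
  obtain ⟨v, hv⟩ := exists_isLocalMin_quadTilt hbot hlsc ha (hmid 0) hxb
  have hfin : quadTilt f a v xb ≠ ⊤ := by
    rw [quadTilt_eq_coe (interior_subset hxb).ne (hbot xb)]
    exact EReal.coe_ne_top _
  exact ⟨(a, v), mem_subLscE_zero_of_quadTilt_le ha ((hmid v).le_of_isLocalMin hfin hv)⟩

/-- a proper lower semicontinuous paraconvex function is `Φ_lsc`-subdifferentiable
at every interior point of its domain. -/
theorem stmt_7 {X : Type*} [NormedAddCommGroup X] [InnerProductSpace ℝ X] [CompleteSpace X]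
    (f : X → EReal) (hbot : ∀ x, f x ≠ ⊥)
    (hsupp : (PhiSupp f).Nonempty) (hdom : (PhiDom f).Nonempty)
    (hlsc : LowerSemicontinuous f) (hpara : ParaconvexOn f) :
    ∀ x ∈ interior (PhiDom f), (SubLscE f 0 x).Nonempty :=
  stmt_7_general f hbot hlsc hpara
end
end

section
/- Let X be a real Hilbert space, let f : X → ℝ∪{+∞} be a proper function and let U ⊆ X be an open convex set with U ⊆ dom(f). If there exists a ≥ 0 such that for every x̄ ∈ U there is v_{x̄} ∈ X with (a, v_{x̄}) ∈ ∂_lsc f(x̄), then f is paraconvex on U, i.e. f(tx+(1-t)y) ≤ t f(x) + (1-t) f(y) + a‖x-y‖² for all x, y ∈ U and t ∈ [0,1]; equivalently, the function x ↦ f(x) + a‖x‖² is convex on U. -/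
open scoped RealInnerProductSpace

noncomputable section

/-- if there is `a ≥ 0` such that `f` has a `Φ_lsc`-subgradient of the form
`(a, v)` at every point of an open convex set `U ⊆ dom f`, then `f` is paraconvex on `U`
with constant `a`. -/
theorem stmt_8 {X : Type*} [NormedAddCommGroup X] [InnerProductSpace ℝ X] [CompleteSpace X]
    (f : X → EReal) (hbot : ∀ x, f x ≠ ⊥)
    (hsupp : (PhiSupp f).Nonempty) (hdom : (PhiDom f).Nonempty)
    (U : Set X) (hUopen : IsOpen U) (hUconv : Convex ℝ U) (hUdom : U ⊆ PhiDom f)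
    (a : ℝ) (ha : 0 ≤ a) (hsub : ∀ xb ∈ U, ∃ v : X, (a, v) ∈ SubLscE f 0 xb) :
    ∀ x ∈ U, ∀ y ∈ U, ∀ t ∈ Set.Icc (0 : ℝ) 1,
      f (t • x + (1 - t) • y) ≤
        (t : EReal) * f x + ((1 - t : ℝ) : EReal) * f y + ((a * ‖x - y‖ ^ 2 : ℝ) : EReal) := by
  intro x hx y hy t ht
  obtain ⟨ht0, ht1⟩ := ht
  set z := t • x + (1 - t) • y with hzdef
  have hz : z ∈ U := hUconv hx hy ht0 (by linarith) (by ring)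
  obtain ⟨v, hv0, hv⟩ := hsub z hz
  -- finiteness
  have hfin : ∀ w ∈ U, f w = ((f w).toReal : EReal) := fun w hw =>
    (EReal.coe_toReal (ne_of_lt (hUdom hw)) (hbot w)).symm
  set fx := (f x).toReal
  set fy := (f y).toReal
  set fz := (f z).toReal
  have hfx := hfin x hx
  have hfy := hfin y hy
  have hfz := hfin z hz
  have hvx := hv x
  have hvy := hv y
  rw [hfx, hfz] at hvx
  rw [hfy, hfz] at hvy
  rw [← EReal.coe_add, EReal.coe_le_coe_iff] at hvx hvy
  rw [hfx, hfy, hfz, ← EReal.coe_mul, ← EReal.coe_mul, ← EReal.coe_add, ← EReal.coe_add,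
    EReal.coe_le_coe_iff]
  -- inner product identity
  have hsum : t • (x - z) + (1 - t) • (y - z) = 0 := by
    rw [hzdef]; module
  have hinner : t * ⟪v, x - z⟫ + (1 - t) * ⟪v, y - z⟫ = 0 := by
    rw [← real_inner_smul_right, ← real_inner_smul_right, ← inner_add_right, hsum,
      inner_zero_right]
  have hz2 : ‖z‖ ^ 2 = t ^ 2 * ‖x‖ ^ 2 + 2 * (t * (1 - t)) * ⟪x, y⟫ + (1 - t) ^ 2 * ‖y‖ ^ 2 := by
    rw [← real_inner_self_eq_norm_sq, hzdef]
    simp only [inner_add_left, inner_add_right, real_inner_smul_left, real_inner_smul_right]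
    simp only [real_inner_self_eq_norm_sq]
    rw [real_inner_comm y x]; ring
  have hxy : ‖x - y‖ ^ 2 = ‖x‖ ^ 2 - 2 * ⟪x, y⟫ + ‖y‖ ^ 2 := by
    rw [← real_inner_self_eq_norm_sq, inner_sub_left, inner_sub_right, inner_sub_right,
      real_inner_self_eq_norm_sq, real_inner_self_eq_norm_sq, real_inner_comm y x]
    ring
  have h1 := mul_le_mul_of_nonneg_left hvx ht0
  have h2 := mul_le_mul_of_nonneg_left hvy (by linarith : (0:ℝ) ≤ 1 - t)
  have h4 : t * ‖x‖ ^ 2 + (1 - t) * ‖y‖ ^ 2 - ‖z‖ ^ 2 = t * (1 - t) * ‖x - y‖ ^ 2 := by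
    rw [hz2, hxy]; ring
  have h5 : (f z).toReal ≤ t * (f x).toReal + (1 - t) * (f y).toReal +
      a * (t * ‖x‖ ^ 2 + (1 - t) * ‖y‖ ^ 2 - ‖z‖ ^ 2) := by nlinarith [h1, h2, hinner]
  rw [h4] at h5
  have h3 : (0:ℝ) ≤ 1 - t * (1 - t) := by nlinarith
  have key : a * (t * (1 - t) * ‖x - y‖ ^ 2) ≤ a * ‖x - y‖ ^ 2 := by
    nlinarith [mul_nonneg (mul_nonneg ha h3) (sq_nonneg ‖x - y‖)]
  linarith
end
end

section
/- Let X be a real Hilbert space and let f : X → ℝ be a proper Φ_lsc-convex function. Suppose f is locally C^{1,1} around x̄ ∈ X, i.e. there exists δ > 0 such that f is differentiable at every point of the open ball B(δ,x̄) and the derivative map y ↦ f'(y) is Lipschitz continuous on B(δ,x̄). Then there exists δ' > 0 such that for every y ∈ B(δ',x̄), the set ∂_lsc f(y) is nonempty. -/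
open scoped RealInnerProductSpace

noncomputable section

/-- a real-valued proper `Φ_lsc`-convex function which is locally `C^{1,1}`
around `xb` is `Φ_lsc`-subdifferentiable on a neighbourhood of `xb`. -/
theorem stmt_9 {X : Type*} [NormedAddCommGroup X] [InnerProductSpace ℝ X] [CompleteSpace X]
    (f : X → ℝ) (hconv : PhiConvexOn (fun x => (f x : EReal)))
    (hsupp : (PhiSupp (fun x => (f x : EReal))).Nonempty)
    (xb : X) (δ : ℝ) (hδ : 0 < δ) (f' : X → X →L[ℝ] ℝ)
    (hdiff : ∀ y ∈ Metric.ball xb δ, HasFDerivAt f (f' y) y)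
    (hlip : ∃ K : NNReal, LipschitzOnWith K f' (Metric.ball xb δ)) :
    ∃ δ' : ℝ, 0 < δ' ∧ ∀ y ∈ Metric.ball xb δ', (SubLscR f y).Nonempty := by
  obtain ⟨K, hK⟩ := hlip
  obtain ⟨φ, ⟨a, w, c, ha, hφ⟩, hφle⟩ := hsupp
  have hφle' : ∀ x, φ x ≤ f x := fun x => EReal.coe_le_coe_iff.mp (hφle x)
  set r : ℝ := δ / 2 with hrdef
  have hr0 : (0:ℝ) < r := by positivity
  refine ⟨r, hr0, fun y hy => ?_⟩
  have hyb : ‖y - xb‖ < r := by rwa [Metric.mem_ball, dist_eq_norm] at hy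
  have hymem : y ∈ Metric.ball xb δ := by
    rw [Metric.mem_ball, dist_eq_norm]; linarith
  set u : X := (InnerProductSpace.toDual ℝ X).symm (f' y) with hu
  have hu' : ∀ h : X, ⟪u, h⟫ = f' y h := fun h => InnerProductSpace.toDual_symm_apply
  set w' : X := w - (2*a) • y with hw'
  set M : ℝ := f y - φ y with hMdef
  have hM0 : 0 ≤ M := by have := hφle' y; simp only [hMdef]; linarith
  set A : ℝ := max (K:ℝ) (a + ‖u - w'‖ / r + M / r^2) with hAdef
  have hA0 : (0:ℝ) ≤ A := le_trans K.coe_nonneg (le_max_left _ _)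
  refine ⟨(A, u + (2*A) • y), hA0, fun x => ?_⟩
  -- key algebraic identity
  have hid : ∀ (B : ℝ) (z : X), ⟪z + (2*B) • y, x - y⟫ - B * ‖x‖^2 + B * ‖y‖^2
      = ⟪z, x - y⟫ - B * ‖x - y‖^2 := by
    intro B z
    have h1 : ‖x - y‖^2 = ‖x‖^2 - 2*⟪x,y⟫ + ‖y‖^2 := norm_sub_sq_real x y
    have h2 : ⟪(2*B) • y, x - y⟫ = 2*B*⟪y,x⟫ - 2*B*‖y‖^2 := by
      rw [real_inner_smul_left, inner_sub_right, real_inner_self_eq_norm_sq]; ring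
    have h3 : ⟪z + (2*B) • y, x - y⟫ = ⟪z, x - y⟫ + ⟪(2*B) • y, x - y⟫ :=
      inner_add_left _ _ _
    have h4 : ⟪y,x⟫ = ⟪x,y⟫ := real_inner_comm x y
    rw [h3, h2, h4, h1]; ring
  show ⟪u + (2*A) • y, x - y⟫ - A * ‖x‖^2 + A * ‖y‖^2 ≤ f x - f y
  rw [hid A u]
  -- suffices: ⟪u, x - y⟫ - A * ‖x - y‖^2 ≤ f x - f y
  by_cases hcase : ‖x - y‖ < r
  · -- local case
    have h' : ‖f x - f y - f' y (x - y)‖ ≤ (K * ‖x - y‖) * ‖x - y‖ := by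
      have hsub : Metric.closedBall y ‖x - y‖ ⊆ Metric.ball xb δ := by
        intro z hz
        rw [Metric.mem_closedBall, dist_eq_norm] at hz
        rw [Metric.mem_ball, dist_eq_norm]
        calc ‖z - xb‖ ≤ ‖z - y‖ + ‖y - xb‖ := norm_sub_le_norm_sub_add_norm_sub z y xb
          _ < ‖x - y‖ + r := by linarith [norm_nonneg (z - y)]
          _ < δ := by rw [hrdef] at hcase ⊢; linarith
      refine (convex_closedBall y ‖x - y‖).norm_image_sub_le_of_norm_hasFDerivWithin_le'
        (fun z hz => (hdiff z (hsub hz)).hasFDerivWithinAt) (fun z hz => ?_)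
        (Metric.mem_closedBall_self (norm_nonneg _)) ?_
      · have := hK.dist_le_mul z (hsub hz) y hymem
        rw [dist_eq_norm, dist_eq_norm] at this
        rw [Metric.mem_closedBall, dist_eq_norm] at hz
        calc ‖f' z - f' y‖ ≤ K * ‖z - y‖ := this
          _ ≤ K * ‖x - y‖ := by
            exact mul_le_mul_of_nonneg_left hz K.coe_nonneg
      · rw [Metric.mem_closedBall, dist_eq_norm]
    rw [Real.norm_eq_abs, abs_le] at h'
    have hAK : (K:ℝ) * ‖x - y‖^2 ≤ A * ‖x - y‖^2 :=
      mul_le_mul_of_nonneg_right (le_max_left _ _) (sq_nonneg _)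
    have huf : ⟪u, x - y⟫ = f' y (x - y) := hu' _
    nlinarith [h'.1, hAK]
  · -- global case, using the minorant φ
    push_neg at hcase
    have hn0 : (0:ℝ) < ‖x - y‖ := lt_of_lt_of_le hr0 hcase
    have hφxy : φ x - φ y = ⟪w', x - y⟫ - a * ‖x - y‖^2 := by
      have hw : w = w' + (2*a) • y := by simp [hw']
      have := hid a w'
      rw [← hw] at this
      have hws : ⟪w, x - y⟫ = ⟪w,x⟫ - ⟪w,y⟫ := inner_sub_right _ _ _
      rw [hφ x, hφ y]
      linarith [this, hws]
    have hfar : φ x - f y ≤ f x - f y := by linarith [hφle' x]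
    have hinn : ⟪u - w', x - y⟫ ≤ ‖u - w'‖ * ‖x - y‖ := real_inner_le_norm _ _
    have hinn' : ⟪u - w', x - y⟫ = ⟪u, x - y⟫ - ⟪w', x - y⟫ := inner_sub_left _ _ _
    have h1 : ‖u - w'‖ * ‖x - y‖ ≤ ‖u - w'‖ / r * ‖x - y‖^2 := by
      rw [div_mul_eq_mul_div, le_div_iff₀ hr0]
      nlinarith [mul_nonneg (mul_nonneg (norm_nonneg (u - w')) (norm_nonneg (x - y)))
        (sub_nonneg.mpr hcase)]
    have h2 : M ≤ M / r^2 * ‖x - y‖^2 := by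
      rw [div_mul_eq_mul_div, le_div_iff₀ (by positivity : (0:ℝ) < r^2)]
      have hrn : r^2 ≤ ‖x - y‖^2 := by nlinarith
      nlinarith [mul_le_mul_of_nonneg_left hrn hM0]
    have h3 : a * ‖x - y‖^2 + (‖u - w'‖ / r) * ‖x - y‖^2 + (M / r^2) * ‖x - y‖^2
        ≤ A * ‖x - y‖^2 := by
      have h := mul_le_mul_of_nonneg_right
        (le_max_right ((K:ℝ)) (a + ‖u - w'‖/r + M/r^2)) (sq_nonneg ‖x - y‖)
      linarith [h]
    have hMeq : φ x - f y = (φ x - φ y) - M := by rw [hMdef]; ring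
    linarith [h1, h2, h3, hinn, hinn', hφxy, hfar, hMeq]
end
end

section
/- Let X be a real Hilbert space, let f : X → ℝ be a proper Φ_lsc-convex function and let U ⊆ X be an open set. If f is twice continuously differentiable on U (f is Fréchet differentiable on U with f' continuous and differentiable on U, and f'' continuous on U), then for every x ∈ U the set ∂_lsc f(x) is nonempty. -/
open scoped RealInnerProductSpace

noncomputable section

open Metric in
set_option maxHeartbeats 1000000 in
theorem stmt_10_aux {X : Type*} [NormedAddCommGroup X] [InnerProductSpace ℝ X] [CompleteSpace X]
    (f : X → ℝ)
    (hsupp : ∃ φ₀ : X → ℝ, (∃ a : ℝ, ∃ v : X, ∃ c : ℝ, 0 ≤ a ∧ ∀ x, φ₀ x = -a * ‖x‖ ^ 2 + ⟪v, x⟫ + c) ∧ ∀ x, φ₀ x ≤ f x)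
    (U : Set X) (hUopen : IsOpen U)
    (f' : X → X →L[ℝ] ℝ) (f'' : X → X →L[ℝ] X →L[ℝ] ℝ)
    (hdiff : ∀ x ∈ U, HasFDerivAt f (f' x) x)
    (hdiff2 : ∀ x ∈ U, HasFDerivAt f' (f'' x) x) (hcont2 : ContinuousOn f'' U) :
    ∀ xb ∈ U, ∃ p : ℝ × X, 0 ≤ p.1 ∧ ∀ x : X,
      ⟪p.2, x - xb⟫ - p.1 * ‖x‖ ^ 2 + p.1 * ‖xb‖ ^ 2 ≤ f x - f xb := by
  intro xb hxb
  obtain ⟨φ₀, ⟨a₀, v₀, c₀, ha₀, hφ₀⟩, hφle⟩ := hsupp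
  -- the gradient
  obtain ⟨w, hw⟩ : ∃ w : X, ∀ z : X, ⟪w, z⟫ = f' xb z :=
    ⟨(InnerProductSpace.toDual ℝ X).symm (f' xb), fun z => InnerProductSpace.toDual_symm_apply⟩
  -- bound on second derivative near xb
  obtain ⟨M, hMdef⟩ : ∃ M : ℝ, M = ‖f'' xb‖ + 1 := ⟨_, rfl⟩
  have hM0 : 0 ≤ M := by rw [hMdef]; positivity
  have hc2 : ContinuousAt f'' xb := hcont2.continuousAt (hUopen.mem_nhds hxb)
  obtain ⟨δ₁, hδ₁, hd1⟩ := Metric.continuousAt_iff (f := f'') (a := xb) |>.mp hc2 1 one_pos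
  obtain ⟨δ₂, hδ₂, hd2⟩ := Metric.isOpen_iff.mp hUopen xb hxb
  obtain ⟨δ, hδdef⟩ : ∃ δ : ℝ, δ = min δ₁ δ₂ := ⟨_, rfl⟩
  have hδ : 0 < δ := hδdef ▸ lt_min hδ₁ hδ₂
  have hball : ∀ y ∈ ball xb δ, ‖f'' y‖ < M ∧ y ∈ U := by
    intro y hy
    have hy1 : dist y xb < δ₁ := lt_of_lt_of_le (mem_ball.mp hy) (hδdef ▸ min_le_left _ _)
    have hy2 : y ∈ ball xb δ₂ := mem_ball.mpr (lt_of_lt_of_le (mem_ball.mp hy) (hδdef ▸ min_le_right _ _))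
    have hdd : dist (f'' y) (f'' xb) = ‖f'' y - f'' xb‖ := dist_eq_norm (f'' y) (f'' xb)
    have := hd1 hy1
    rw [hdd] at this
    have hnn : ‖f'' y‖ - ‖f'' xb‖ ≤ ‖f'' y - f'' xb‖ := norm_sub_norm_le (f'' y) (f'' xb)
    exact ⟨by rw [hMdef]; linarith, hd2 hy2⟩
  -- Taylor-type local lower bound
  have htaylor : ∀ x : X, ‖x - xb‖ < δ → |f x - f xb - f' xb (x - xb)| ≤ M * ‖x - xb‖ ^ 2 := by
    intro x hx
    set r := ‖x - xb‖ with hr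
    have hr0 : 0 ≤ r := norm_nonneg _
    have hsub : closedBall xb r ⊆ ball xb δ := closedBall_subset_ball hx
    have hsU : ∀ y ∈ closedBall xb r, y ∈ U := fun y hy => (hball y (hsub hy)).2
    have hLip : ∀ y ∈ closedBall xb r, ‖f' y - f' xb‖ ≤ M * r := by
      intro y hy
      have h1 : ‖f' y - f' xb‖ ≤ M * ‖y - xb‖ :=
        (convex_closedBall xb r).norm_image_sub_le_of_norm_hasFDerivWithin_le
          (fun z hz => (hdiff2 z (hsU z hz)).hasFDerivWithinAt)
          (fun z hz => (hball z (hsub hz)).1.le)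
          (mem_closedBall_self hr0) hy
      have h2 : ‖y - xb‖ ≤ r := mem_closedBall_iff_norm.mp hy
      exact h1.trans (by nlinarith)
    have hxmem : x ∈ closedBall xb r := mem_closedBall_iff_norm.mpr le_rfl
    have := (convex_closedBall xb r).norm_image_sub_le_of_norm_hasFDerivWithin_le'
      (fun z hz => (hdiff z (hsU z hz)).hasFDerivWithinAt) hLip
      (mem_closedBall_self hr0) hxmem
    calc |f x - f xb - f' xb (x - xb)| = ‖f x - f xb - f' xb (x - xb)‖ := rfl
      _ ≤ M * r * ‖x - xb‖ := this
      _ = M * ‖x - xb‖ ^ 2 := by rw [hr]; ring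
  -- constants for the global bound
  obtain ⟨K, hKdef⟩ : ∃ K : ℝ, K = -a₀ * ‖xb‖ ^ 2 + ⟪v₀, xb⟫ + c₀ - f xb := ⟨_, rfl⟩
  have hK : K ≤ 0 := by
    have := hφle xb
    rw [hφ₀ xb] at this
    rw [hKdef]; linarith
  obtain ⟨u, hudef⟩ : ∃ u : X, u = v₀ - (2 * a₀) • xb - w := ⟨_, rfl⟩
  obtain ⟨a, hadef⟩ : ∃ a : ℝ, a = M + a₀ + ‖u‖ / δ + max (-K) 0 / δ ^ 2 := ⟨_, rfl⟩
  have ha : 0 ≤ a := by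
    rw [hadef]
    have hd1' : 0 ≤ ‖u‖ / δ := div_nonneg (norm_nonneg u) hδ.le
    have hd2' : 0 ≤ max (-K) 0 / δ ^ 2 := div_nonneg (le_max_right (-K) 0) (sq_nonneg δ)
    linarith
  refine ⟨(a, w + (2 * a) • xb), ha, ?_⟩
  intro x
  -- key algebraic identity
  have hid : ⟪w + (2 * a) • xb, x - xb⟫ - a * ‖x‖ ^ 2 + a * ‖xb‖ ^ 2
      = ⟪w, x - xb⟫ - a * ‖x - xb‖ ^ 2 := by
    have e1 : ⟪w + (2 * a) • xb, x - xb⟫ = ⟪w, x - xb⟫ + 2 * a * ⟪xb, x - xb⟫ := by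
      rw [inner_add_left, real_inner_smul_left]
    have e2 : ‖x - xb‖ ^ 2 = ‖x‖ ^ 2 - 2 * ⟪x, xb⟫ + ‖xb‖ ^ 2 := norm_sub_sq_real x xb
    have e3 : ⟪xb, x - xb⟫ = ⟪xb, x⟫ - ‖xb‖ ^ 2 := by
      rw [inner_sub_right, real_inner_self_eq_norm_sq]
    have e4 : ⟪x, xb⟫ = ⟪xb, x⟫ := real_inner_comm xb x
    rw [e1, e3, e2, e4]; ring
  rw [hid]
  rcases lt_or_ge ‖x - xb‖ δ with hlt | hge
  · -- local case
    have hT := htaylor x hlt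
    have hwa : ⟪w, x - xb⟫ = f' xb (x - xb) := hw _
    have haM : M * ‖x - xb‖ ^ 2 ≤ a * ‖x - xb‖ ^ 2 := by
      have hd1 : 0 ≤ ‖u‖ / δ := div_nonneg (norm_nonneg u) hδ.le
      have hd2 : 0 ≤ max (-K) 0 / δ ^ 2 := div_nonneg (le_max_right (-K) 0) (sq_nonneg δ)
      have : M ≤ a := by rw [hadef]; linarith
      nlinarith [sq_nonneg ‖x - xb‖]
    rw [hwa]
    have := abs_le.mp hT
    linarith
  · -- far case: use the global minorant φ₀
    have hfx : -a₀ * ‖x‖ ^ 2 + ⟪v₀, x⟫ + c₀ ≤ f x := by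
      have := hφle x; rw [hφ₀ x] at this; linarith
    -- expansion
    have E : (-a₀ * ‖x‖ ^ 2 + ⟪v₀, x⟫ + c₀) - f xb - ⟪w, x - xb⟫
        = K - a₀ * ‖x - xb‖ ^ 2 + ⟪u, x - xb⟫ := by
      have e2 : ‖x - xb‖ ^ 2 = ‖x‖ ^ 2 - 2 * ⟪x, xb⟫ + ‖xb‖ ^ 2 := norm_sub_sq_real x xb
      have e4 : ⟪x, xb⟫ = ⟪xb, x⟫ := real_inner_comm xb x
      have e5 : ⟪u, x - xb⟫ = ⟪v₀, x - xb⟫ - 2 * a₀ * ⟪xb, x - xb⟫ - ⟪w, x - xb⟫ := by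
        rw [hudef]; simp only [inner_sub_left, real_inner_smul_left]
      have e6 : ⟪v₀, x - xb⟫ = ⟪v₀, x⟫ - ⟪v₀, xb⟫ := inner_sub_right v₀ x xb
      have e7 : ⟪xb, x - xb⟫ = ⟪xb, x⟫ - ‖xb‖ ^ 2 := by
        rw [inner_sub_right, real_inner_self_eq_norm_sq]
      rw [e5, e6, e7, hKdef, e2, e4]; ring
    have hinner : -(‖u‖ * ‖x - xb‖) ≤ ⟪u, x - xb⟫ :=
      neg_le_of_abs_le (abs_real_inner_le_norm u (x - xb))
    have h1 : ‖u‖ * ‖x - xb‖ ≤ ‖u‖ / δ * ‖x - xb‖ ^ 2 := by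
      rw [div_mul_eq_mul_div, le_div_iff₀ hδ]
      nlinarith [mul_le_mul_of_nonneg_left hge (mul_nonneg (norm_nonneg u) (norm_nonneg (x - xb)))]
    have h2 : max (-K) 0 ≤ max (-K) 0 / δ ^ 2 * ‖x - xb‖ ^ 2 := by
      rw [div_mul_eq_mul_div, le_div_iff₀ (by positivity)]
      have : δ ^ 2 ≤ ‖x - xb‖ ^ 2 := by nlinarith
      nlinarith [le_max_right (-K) 0]
    have hKmax : -K ≤ max (-K) 0 := le_max_left _ _
    have hMsq : 0 ≤ M * ‖x - xb‖ ^ 2 := by positivity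
    have hfin : ⟪w, x - xb⟫ - a * ‖x - xb‖ ^ 2 ≤ (-a₀ * ‖x‖ ^ 2 + ⟪v₀, x⟫ + c₀) - f xb := by
      have : a * ‖x - xb‖ ^ 2 = M * ‖x - xb‖ ^ 2 + a₀ * ‖x - xb‖ ^ 2
          + ‖u‖ / δ * ‖x - xb‖ ^ 2 + max (-K) 0 / δ ^ 2 * ‖x - xb‖ ^ 2 := by
        rw [hadef]; ring
      linarith [E]
    linarith

/-- a real-valued proper `Φ_lsc`-convex function which is twice continuously
differentiable on an open set `U` is `Φ_lsc`-subdifferentiable at every point of `U`. -/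
theorem stmt_10 {X : Type*} [NormedAddCommGroup X] [InnerProductSpace ℝ X] [CompleteSpace X]
    (f : X → ℝ) (hconv : PhiConvexOn (fun x => (f x : EReal)))
    (hsupp : (PhiSupp (fun x => (f x : EReal))).Nonempty)
    (U : Set X) (hUopen : IsOpen U)
    (f' : X → X →L[ℝ] ℝ) (f'' : X → X →L[ℝ] X →L[ℝ] ℝ)
    (hdiff : ∀ x ∈ U, HasFDerivAt f (f' x) x) (hcont : ContinuousOn f' U)
    (hdiff2 : ∀ x ∈ U, HasFDerivAt f' (f'' x) x) (hcont2 : ContinuousOn f'' U) :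
    ∀ x ∈ U, (SubLscR f x).Nonempty := by
  intro xb hxb
  obtain ⟨φ₀, ⟨⟨a₀, v₀, c₀, ha₀, hφ₀⟩, hφle⟩⟩ := hsupp
  have hφle' : ∀ x, φ₀ x ≤ f x := fun x => EReal.coe_le_coe_iff.mp (hφle x)
  obtain ⟨p, hp1, hp2⟩ := stmt_10_aux f ⟨φ₀, ⟨a₀, v₀, c₀, ha₀, hφ₀⟩, hφle'⟩ U hUopen f' f''
    hdiff hdiff2 hcont2 xb hxb
  exact ⟨p, hp1, hp2⟩
end
end

section
/- Let X be a real Hilbert space, let f : X → ℝ∪{+∞} be a proper Φ_lsc-convex function and let x̄ ∈ dom(f). Then ∂_lsc f(x̄) ≠ ∅ if and only if the proximal subdifferential ∂_P f(x̄) is nonempty. More precisely: if (a,w) ∈ ∂_lsc f(x̄) then w − 2a·x̄ ∈ ∂_P f(x̄); and if v ∈ ∂_P f(x̄) then there exists ā ≥ 0 such that (ā, v + 2ā·x̄) ∈ ∂_lsc f(x̄). -/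
open scoped RealInnerProductSpace

noncomputable section

lemma norm_sq_expand {X : Type*} [NormedAddCommGroup X] [InnerProductSpace ℝ X] (xb x : X) :
    ‖x‖ ^ 2 = ‖xb‖ ^ 2 + 2 * ⟪xb, x - xb⟫ + ‖x - xb‖ ^ 2 := by
  have h := norm_add_sq_real xb (x - xb)
  simpa using h

lemma id1 {X : Type*} [NormedAddCommGroup X] [InnerProductSpace ℝ X] (a : ℝ) (w xb x : X) :
    ⟪w, x - xb⟫ - a * ‖x‖ ^ 2 + a * ‖xb‖ ^ 2
      = ⟪w - (2 * a) • xb, x - xb⟫ - a * ‖x - xb‖ ^ 2 := by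
  rw [inner_sub_left, real_inner_smul_left, norm_sq_expand xb x]
  ring

/-- equivalence of `Φ_lsc`-subdifferentiability and proximal
subdifferentiability, with the precise correspondences between the two subdifferentials. -/
theorem stmt_11 {X : Type*} [NormedAddCommGroup X] [InnerProductSpace ℝ X] [CompleteSpace X]
    (f : X → EReal) (hbot : ∀ x, f x ≠ ⊥)
    (hsupp : (PhiSupp f).Nonempty) (hdom : (PhiDom f).Nonempty)
    (hconv : PhiConvexOn f) (xb : X) (hxb : xb ∈ PhiDom f) :
    ((SubLscE f 0 xb).Nonempty ↔ (ProxSub f xb).Nonempty) ∧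
    (∀ a : ℝ, ∀ w : X, (a, w) ∈ SubLscE f 0 xb → w - (2 * a) • xb ∈ ProxSub f xb) ∧
    (∀ v ∈ ProxSub f xb, ∃ a' : ℝ, 0 ≤ a' ∧ (a', v + (2 * a') • xb) ∈ SubLscE f 0 xb) := by
  obtain ⟨φ, ⟨a₀, v₀, c₀, ha₀, hφ⟩, hφle⟩ := hsupp
  set r : ℝ := (f xb).toReal with hrdef
  have hfr : f xb = ((r : ℝ) : EReal) := (EReal.coe_toReal (ne_of_lt hxb) (hbot xb)).symm
  have part2 : ∀ a : ℝ, ∀ w : X, (a, w) ∈ SubLscE f 0 xb →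
      w - (2 * a) • xb ∈ ProxSub f xb := by
    rintro a w ⟨ha, hw⟩
    refine ⟨1, one_pos, 2 * a, by linarith, fun x _ => ?_⟩
    have heq : ⟪w - (2 * a) • xb, x - xb⟫ - 2 * a / 2 * ‖x - xb‖ ^ 2
        = ⟪w, x - xb⟫ - a * ‖x‖ ^ 2 + a * ‖xb‖ ^ 2 - 0 := by
      have h := id1 a w xb x
      linarith [h]
    rw [show (⟪w - (2 * a) • xb, x - xb⟫ - 2 * a / 2 * ‖x - xb‖ ^ 2 : ℝ)
        = ⟪w, x - xb⟫ - a * ‖x‖ ^ 2 + a * ‖xb‖ ^ 2 - 0 from heq]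
    exact hw x
  have part3 : ∀ v ∈ ProxSub f xb, ∃ a' : ℝ, 0 ≤ a' ∧
      (a', v + (2 * a') • xb) ∈ SubLscE f 0 xb := by
    rintro v ⟨δ, hδ, ρ, hρ, hloc⟩
    set w₀ : X := v₀ - v - (2 * a₀) • xb with hw₀def
    set K : ℝ := c₀ - r + ⟪v₀, xb⟫ - a₀ * ‖xb‖ ^ 2 with hKdef
    set M : ℝ := ‖w₀‖ + |K| / δ with hMdef
    have hM0 : 0 ≤ M := by
      rw [hMdef]; positivity
    set a' : ℝ := max (ρ / 2) (a₀ + M / δ) with ha'def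
    have ha'1 : ρ / 2 ≤ a' := le_max_left _ _
    have ha'2 : a₀ + M / δ ≤ a' := le_max_right _ _
    have ha' : 0 ≤ a' := le_trans (by linarith) ha'1
    refine ⟨a', ha', ha', fun x => ?_⟩
    have heq : (⟪v + (2 * a') • xb, x - xb⟫ - a' * ‖x‖ ^ 2 + a' * ‖xb‖ ^ 2 - 0 : ℝ)
        = ⟪v, x - xb⟫ - a' * ‖x - xb‖ ^ 2 := by
      have h := id1 a' (v + (2 * a') • xb) xb x
      rw [add_sub_cancel_right] at h
      rw [← h]; ring
    rw [heq, hfr, ← EReal.coe_add]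
    by_cases hc : ‖x - xb‖ < δ
    · have h2 := hloc x hc
      rw [hfr, ← EReal.coe_add] at h2
      refine le_trans (EReal.coe_le_coe_iff.mpr ?_) h2
      nlinarith [sq_nonneg ‖x - xb‖]
    · push_neg at hc
      refine le_trans (EReal.coe_le_coe_iff.mpr ?_) (hφle x)
      rw [hφ x]
      have hx2 := norm_sq_expand xb x
      have hvx : ⟪v₀, x⟫ = ⟪v₀, xb⟫ + ⟪v₀, x - xb⟫ := by
        rw [inner_sub_right]; ring
      have hw0 : ⟪w₀, x - xb⟫ = ⟪v₀, x - xb⟫ - ⟪v, x - xb⟫ - 2 * a₀ * ⟪xb, x - xb⟫ := by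
        rw [hw₀def, inner_sub_left, inner_sub_left, real_inner_smul_left]
      have hCS : -(‖w₀‖ * ‖x - xb‖) ≤ ⟪w₀, x - xb⟫ := by
        have := abs_real_inner_le_norm w₀ (x - xb)
        have := neg_abs_le ⟪w₀, x - xb⟫
        linarith
      have ht0 : (0 : ℝ) ≤ ‖x - xb‖ := norm_nonneg _
      have h1 : 0 ≤ (a' - a₀ - M / δ) * ‖x - xb‖ ^ 2 :=
        mul_nonneg (by linarith) (sq_nonneg _)
      have h2 : 0 ≤ M / δ * ((‖x - xb‖ - δ) * ‖x - xb‖) :=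
        mul_nonneg (div_nonneg hM0 hδ.le) (mul_nonneg (by linarith) ht0)
      have h3 : 0 ≤ |K| / δ * (‖x - xb‖ - δ) :=
        mul_nonneg (div_nonneg (abs_nonneg K) hδ.le) (by linarith)
      have hMδ : M / δ * δ = M := div_mul_cancel₀ _ hδ.ne'
      have hKδ : |K| / δ * δ = |K| := div_mul_cancel₀ _ hδ.ne'
      have habs : -K ≤ |K| := neg_le_abs K
      have hMexp : M = ‖w₀‖ + |K| / δ := hMdef
      nlinarith [h1, h2, h3, hCS, habs, mul_le_mul_of_nonneg_right ha'2 (sq_nonneg ‖x - xb‖)]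
  refine ⟨⟨fun h => ?_, fun h => ?_⟩, part2, part3⟩
  · obtain ⟨p, hp⟩ := h
    exact ⟨p.2 - (2 * p.1) • xb, part2 p.1 p.2 hp⟩
  · obtain ⟨v, hv⟩ := h
    obtain ⟨a', _, ha'mem⟩ := part3 v hv
    exact ⟨(a', v + (2 * a') • xb), ha'mem⟩
end
end

section
/- Let X be a real Hilbert space, let f, g : X → ℝ∪{+∞} be proper Φ_lsc-convex functions, let α ∈ ℝ, ε ≥ 0, and let x̄ ∈ dom(f) ∩ dom(g) satisfy f(x̄) ≥ α and g(x̄) ≥ α. If (0,0) ∈ co(∂^ε_lsc f(x̄) ∪ ∂^ε_lsc g(x̄)) (convex hull taken in ℝ×X), then there exist φ₁ ∈ supp(f) and φ₂ ∈ supp(g) such that {x ∈ X : φ₁(x) < α − ε} ∩ {x ∈ X : φ₂(x) < α − ε} = ∅. -/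
/-!
Since `f xb ≥ α`, every ε-subgradient `p = (a, v)` of `f` at `xb` gives the support function
`x ↦ ⟪v, x - xb⟫ - a‖x‖² + a‖xb‖² + (α - ε)` of `f`, which depends linearly on `p` up to the
constant. The sets of ε-subgradients are convex, so `(0, 0) = s • p + t • q` with
`p ∈ ∂^ε f(xb)`, `q ∈ ∂^ε g(xb)` (or `(0, 0)` is itself a subgradient, whose support function is
the constant `α - ε`). Then `s (φ₁ - (α - ε)) + t (φ₂ - (α - ε)) = 0`, so `φ₁` and `φ₂` are never
both below `α - ε`.
-/

open scoped RealInnerProductSpace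

noncomputable section

section Subgradient

variable {X : Type*} [NormedAddCommGroup X] [InnerProductSpace ℝ X]

def subgradMinorant (xb : X) (p : ℝ × X) (x : X) : ℝ :=
  ⟪p.2, x - xb⟫ - p.1 * ‖x‖ ^ 2 + p.1 * ‖xb‖ ^ 2

theorem subgradMinorant_add (xb : X) (p q : ℝ × X) (s t : ℝ) (x : X) :
    subgradMinorant xb (s • p + t • q) x =
      s * subgradMinorant xb p x + t * subgradMinorant xb q x := by
  simp only [subgradMinorant, Prod.fst_add, Prod.snd_add, Prod.smul_fst, Prod.smul_snd,
    smul_eq_mul, inner_add_left, real_inner_smul_left]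
  ring

@[simp]
theorem subgradMinorant_zero (xb : X) (x : X) : subgradMinorant xb 0 x = 0 := by
  simp [subgradMinorant]

theorem convex_subLscE (f : X → EReal) (ε : ℝ) (xb : X) : Convex ℝ (SubLscE f ε xb) := by
  rintro p ⟨hp₀, hp⟩ q ⟨hq₀, hq⟩ s t hs ht hst
  refine ⟨by simp only [Prod.fst_add, Prod.smul_fst, smul_eq_mul]; positivity, fun x => ?_⟩
  change f xb + ((subgradMinorant xb (s • p + t • q) x - ε : ℝ) : EReal) ≤ f x
  have hcombo : subgradMinorant xb (s • p + t • q) x - ε ≤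
      max (subgradMinorant xb p x - ε) (subgradMinorant xb q x - ε) := by
    rw [subgradMinorant_add, max_sub_sub_right]
    have := Convex.combo_le_max (subgradMinorant xb p x) (subgradMinorant xb q x) hs ht hst
    simp only [smul_eq_mul] at this
    linarith
  rcases le_total (subgradMinorant xb p x - ε) (subgradMinorant xb q x - ε) with h | h
  · rw [max_eq_right h] at hcombo
    exact (add_le_add_right (EReal.coe_le_coe_iff.2 hcombo) _).trans (hq x)
  · rw [max_eq_left h] at hcombo
    exact (add_le_add_right (EReal.coe_le_coe_iff.2 hcombo) _).trans (hp x)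

theorem subgradMinorant_add_mem_phiSupp {f : X → EReal} {ε α : ℝ} {xb : X}
    (hα : (α : EReal) ≤ f xb) {p : ℝ × X} (hp : p ∈ SubLscE f ε xb) :
    (fun x => subgradMinorant xb p x + (α - ε)) ∈ PhiSupp f := by
  refine ⟨⟨p.1, p.2, p.1 * ‖xb‖ ^ 2 - ⟪p.2, xb⟫ + (α - ε), hp.1, fun x => ?_⟩, fun x => ?_⟩
  · simp only [subgradMinorant, inner_sub_right]
    ring
  · calc ((subgradMinorant xb p x + (α - ε) : ℝ) : EReal)
        = (α : EReal) + ((subgradMinorant xb p x - ε : ℝ) : EReal) := by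
          rw [← EReal.coe_add]; congr 1; ring
      _ ≤ f xb + ((subgradMinorant xb p x - ε : ℝ) : EReal) := add_le_add_left hα _
      _ ≤ f x := hp.2 x

theorem setOf_subgradMinorant_lt_inter_eq_empty {xb : X} {p q : ℝ × X} {s t : ℝ}
    (hs : 0 ≤ s) (ht : 0 ≤ t) (hst : s + t = 1) (h : s • p + t • q = 0) (c : ℝ) :
    {x | subgradMinorant xb p x + c < c} ∩ {x | subgradMinorant xb q x + c < c} = ∅ := by
  refine Set.eq_empty_of_forall_notMem fun x ⟨hpx, hqx⟩ => ?_
  have hzero := subgradMinorant_add xb p q s t x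
  rw [h, subgradMinorant_zero] at hzero
  simp only [Set.mem_ofPred_eq, add_lt_iff_neg_right] at hpx hqx
  have := Convex.combo_le_max (subgradMinorant xb p x) (subgradMinorant xb q x) hs ht hst
  simp only [smul_eq_mul] at this
  linarith [max_lt hpx hqx]

end Subgradient

theorem Convex.mem_or_mem_or_mem_convexJoin_of_mem_convexHull_union {𝕜 E : Type*} [Field 𝕜]
    [LinearOrder 𝕜] [IsStrictOrderedRing 𝕜] [AddCommGroup E] [Module 𝕜 E] {A B : Set E}
    (hA : Convex 𝕜 A) (hB : Convex 𝕜 B) {z : E} (hz : z ∈ convexHull 𝕜 (A ∪ B)) :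
    z ∈ A ∨ z ∈ B ∨ z ∈ convexJoin 𝕜 A B := by
  rcases A.eq_empty_or_nonempty with rfl | hA₀
  · rw [Set.empty_union, hB.convexHull_eq] at hz
    exact .inr (.inl hz)
  rcases B.eq_empty_or_nonempty with rfl | hB₀
  · rw [Set.union_empty, hA.convexHull_eq] at hz
    exact .inl hz
  rw [hA.convexHull_union hB hA₀ hB₀] at hz
  exact .inr (.inr hz)

theorem stmt_13_general {X : Type*} [NormedAddCommGroup X] [InnerProductSpace ℝ X]
    (f g : X → EReal) (hfsupp : (PhiSupp f).Nonempty) (hgsupp : (PhiSupp g).Nonempty)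
    (α ε : ℝ) (xb : X) (hfα : (α : EReal) ≤ f xb) (hgα : (α : EReal) ≤ g xb)
    (hzs : ((0, 0) : ℝ × X) ∈ convexHull ℝ (SubLscE f ε xb ∪ SubLscE g ε xb)) :
    ∃ φ₁ ∈ PhiSupp f, ∃ φ₂ ∈ PhiSupp g,
      {x : X | φ₁ x < α - ε} ∩ {x : X | φ₂ x < α - ε} = ∅ := by
  rcases (convex_subLscE f ε xb).mem_or_mem_or_mem_convexJoin_of_mem_convexHull_union
    (convex_subLscE g ε xb) hzs with h0 | h0 | h0
  · obtain ⟨φ₂, hφ₂⟩ := hgsupp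
    refine ⟨_, subgradMinorant_add_mem_phiSupp hfα h0, φ₂, hφ₂, ?_⟩
    simp [← Prod.zero_eq_mk]
  · obtain ⟨φ₁, hφ₁⟩ := hfsupp
    refine ⟨φ₁, hφ₁, _, subgradMinorant_add_mem_phiSupp hgα h0, ?_⟩
    simp [← Prod.zero_eq_mk]
  · obtain ⟨p, hp, q, hq, s, t, hs, ht, hst, hpq⟩ := mem_convexJoin.1 h0
    exact ⟨_, subgradMinorant_add_mem_phiSupp hfα hp, _, subgradMinorant_add_mem_phiSupp hgα hq,
      setOf_subgradMinorant_lt_inter_eq_empty hs ht hst hpq _⟩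

/-- if the zero subgradient condition `(0,0) ∈ co(∂^ε f(xb) ∪ ∂^ε g(xb))`
holds at a point `xb` where `f(xb) ≥ α` and `g(xb) ≥ α`, then some `φ₁ ∈ supp f` and
`φ₂ ∈ supp g` satisfy the intersection property at level `α - ε`. -/
theorem stmt_13 {X : Type*} [NormedAddCommGroup X] [InnerProductSpace ℝ X] [CompleteSpace X]
    (f g : X → EReal) (hfbot : ∀ x, f x ≠ ⊥) (hgbot : ∀ x, g x ≠ ⊥)
    (hfsupp : (PhiSupp f).Nonempty) (hfdom : (PhiDom f).Nonempty)
    (hgsupp : (PhiSupp g).Nonempty) (hgdom : (PhiDom g).Nonempty)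
    (hfconv : PhiConvexOn f) (hgconv : PhiConvexOn g)
    (α ε : ℝ) (hε : 0 ≤ ε)
    (xb : X) (hxf : xb ∈ PhiDom f) (hxg : xb ∈ PhiDom g)
    (hfα : (α : EReal) ≤ f xb) (hgα : (α : EReal) ≤ g xb)
    (hzs : ((0, 0) : ℝ × X) ∈ convexHull ℝ (SubLscE f ε xb ∪ SubLscE g ε xb)) :
    ∃ φ₁ ∈ PhiSupp f, ∃ φ₂ ∈ PhiSupp g,
      {x : X | φ₁ x < α - ε} ∩ {x : X | φ₂ x < α - ε} = ∅ :=
  stmt_13_general f g hfsupp hgsupp α ε xb hfα hgα hzs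
end
end

section
/- Let X be a real Hilbert space, let f, g : X → ℝ∪{+∞} be Φ_lsc-convex functions with nonempty effective domains, and let α ∈ ℝ. If there exist φ₁ ∈ supp(f) and φ₂ ∈ supp(g) such that {x : φ₁(x) < α} ∩ {x : φ₂(x) < α} = ∅, then for every ε > 0 there exist x₁ ∈ dom(f) and x₂ ∈ dom(g) such that (0,0) ∈ co(∂^ε_lsc f(x₁) ∪ ∂^ε_lsc g(x₂)) (convex hull taken in ℝ×X). -/
open scoped RealInnerProductSpace

noncomputable section

/-!
Write `φᵢ x = -aᵢ‖x‖² + ⟪vᵢ, x⟫ + cᵢ`. A minorant of this form makes `(aᵢ, vᵢ)` an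
`ε`-subgradient at every `ε`-maximiser of `x ↦ ⟪vᵢ, x⟫ - aᵢ‖x‖² - f x`, so it suffices that
`(0, 0)` lies on the segment from `(a₁, v₁)` to `(a₂, v₂)`. If it does not, there is a direction `d`
along which both `φᵢ` tend to `-∞` (any `d ≠ 0` works when `aᵢ > 0`; otherwise `⟪vᵢ, d⟫ < 0` is
needed, and two vectors without `0` on their segment admit such a common `d`), so `φ₁` and `φ₂` drop
below `α` at a common point.
-/

open Filter

section

variable {X : Type*} [NormedAddCommGroup X] [InnerProductSpace ℝ X]

theorem exists_mem_subLscE_of_minorant {f : X → EReal} (hdom : (PhiDom f).Nonempty)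
    {a c : ℝ} {v : X} (ha : 0 ≤ a)
    (hmin : ∀ x, ((-a * ‖x‖ ^ 2 + ⟪v, x⟫ + c : ℝ) : EReal) ≤ f x) {ε : ℝ} (hε : 0 < ε) :
    ∃ x₁ ∈ PhiDom f, (a, v) ∈ SubLscE f ε x₁ := by
  have hreal : ∀ x ∈ PhiDom f, f x = ((f x).toReal : EReal) := fun x hx =>
    (EReal.coe_toReal hx.ne (ne_bot_of_le_ne_bot (EReal.coe_ne_bot _) (hmin x))).symm
  have hmin' : ∀ x ∈ PhiDom f, -a * ‖x‖ ^ 2 + ⟪v, x⟫ + c ≤ (f x).toReal := fun x hx => by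
    have := hmin x
    rwa [hreal x hx, EReal.coe_le_coe_iff] at this
  set slack : X → ℝ := fun x => ⟪v, x⟫ - a * ‖x‖ ^ 2 - (f x).toReal
  have hbdd : BddAbove (slack '' PhiDom f) := by
    refine ⟨-c, ?_⟩
    rintro _ ⟨x, hx, rfl⟩
    linarith [hmin' x hx]
  obtain ⟨_, ⟨x₁, hx₁, rfl⟩, hx₁max⟩ := exists_lt_of_lt_csSup (hdom.image slack)
    (sub_lt_self _ hε)
  refine ⟨x₁, hx₁, ha, fun x => ?_⟩
  rcases eq_or_ne (f x) ⊤ with htop | hx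
  · simp [htop]
  have hle := le_csSup hbdd ⟨x, hx.lt_top, rfl⟩
  rw [hreal x hx.lt_top, hreal x₁ hx₁, ← EReal.coe_add, EReal.coe_le_coe_iff, inner_sub_right]
  linarith

def IsDescentDir (a : ℝ) (v d : X) : Prop :=
  ⟪v, d⟫ < 0 ∨ (0 < a ∧ d ≠ 0)

theorem tendsto_smul_atBot_of_isDescentDir {a c : ℝ} {v d : X} (ha : 0 ≤ a)
    (hd : IsDescentDir a v d) :
    Tendsto (fun t : ℝ => -a * ‖t • d‖ ^ 2 + ⟪v, t • d⟫ + c) atTop atBot := by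
  have hform : ∀ t : ℝ, -a * ‖t • d‖ ^ 2 + ⟪v, t • d⟫ + c =
      t * (-(a * ‖d‖ ^ 2) * t + ⟪v, d⟫) + c := fun t => by
    rw [norm_smul, real_inner_smul_right, mul_pow, Real.norm_eq_abs, sq_abs]
    ring
  simp_rw [hform]
  refine tendsto_atBot_add_const_right _ c ?_
  rcases hd with hv | ⟨ha_pos, hd_ne⟩
  · refine tendsto_atBot_mono' _ ?_ (tendsto_id.atTop_mul_const_of_neg hv)
    filter_upwards [eventually_ge_atTop 0] with t ht
    have : 0 ≤ a * ‖d‖ ^ 2 * t := by positivity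
    simp only [id]
    nlinarith
  · refine tendsto_id.atTop_mul_atBot₀ (tendsto_atBot_add_const_right _ _ ?_)
    have hquad : 0 < a * ‖d‖ ^ 2 := mul_pos ha_pos (pow_pos (norm_pos_iff.2 hd_ne) 2)
    exact tendsto_id.const_mul_atTop_of_neg (neg_neg_of_pos hquad)

/-- Unless it vanishes, which puts `0` on the segment, `‖v₂‖ • v₁ + ‖v₁‖ • v₂` makes a positive
inner product with both vectors. -/
theorem exists_inner_neg_of_zero_notMem_segment {v₁ v₂ : X} (h : (0 : X) ∉ segment ℝ v₁ v₂) :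
    ∃ d : X, ⟪v₁, d⟫ < 0 ∧ ⟪v₂, d⟫ < 0 := by
  have hn₁ : 0 < ‖v₁‖ := norm_pos_iff.2 fun h₀ => h (h₀ ▸ left_mem_segment ℝ v₁ v₂)
  have hn₂ : 0 < ‖v₂‖ := norm_pos_iff.2 fun h₀ => h (h₀ ▸ right_mem_segment ℝ v₁ v₂)
  set w : X := ‖v₂‖ • v₁ + ‖v₁‖ • v₂ with hw
  set K : ℝ := ‖v₁‖ * ‖v₂‖ + ⟪v₁, v₂⟫
  have h₁ : ⟪v₁, w⟫ = ‖v₁‖ * K := by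
    rw [inner_add_right, real_inner_smul_right, real_inner_smul_right, real_inner_self_eq_norm_sq]
    ring
  have h₂ : ⟪v₂, w⟫ = ‖v₂‖ * K := by
    rw [inner_add_right, real_inner_smul_right, real_inner_smul_right, real_inner_self_eq_norm_sq,
      real_inner_comm]
    ring
  have hww : ‖w‖ ^ 2 = 2 * ‖v₁‖ * ‖v₂‖ * K := by
    rw [← real_inner_self_eq_norm_sq]
    conv_lhs => rw [hw]
    rw [inner_add_left, real_inner_smul_left, real_inner_smul_left, h₁, h₂]
    ring
  have hK : 0 < K := by
    have hK₀ : 0 ≤ K := by linarith [neg_le_of_abs_le (abs_real_inner_le_norm v₁ v₂)]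
    refine hK₀.lt_of_ne fun hK => h ?_
    have hw0 : w = 0 := by
      rw [← norm_eq_zero, ← sq_eq_zero_iff, hww, ← hK, mul_zero]
    refine ⟨‖v₂‖ / (‖v₁‖ + ‖v₂‖), ‖v₁‖ / (‖v₁‖ + ‖v₂‖), by positivity, by positivity,
      by field_simp; ring, ?_⟩
    rw [div_eq_inv_mul, div_eq_inv_mul, mul_smul, mul_smul, ← smul_add, ← hw, hw0, smul_zero]
  exact ⟨-w, by rw [inner_neg_right, h₁]; nlinarith, by rw [inner_neg_right, h₂]; nlinarith⟩

theorem exists_isDescentDir [Nontrivial X] {a₁ a₂ : ℝ} {v₁ v₂ : X} (ha₁ : 0 ≤ a₁) (ha₂ : 0 ≤ a₂)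
    (h : ((0 : ℝ), (0 : X)) ∉ segment ℝ (a₁, v₁) (a₂, v₂)) :
    ∃ d : X, IsDescentDir a₁ v₁ d ∧ IsDescentDir a₂ v₂ d := by
  rcases ha₁.eq_or_lt with rfl | ha₁ <;> rcases ha₂.eq_or_lt with rfl | ha₂
  · rw [← Prod.image_mk_segment_right] at h
    obtain ⟨d, hd₁, hd₂⟩ := exists_inner_neg_of_zero_notMem_segment fun h₀ => h ⟨0, h₀, rfl⟩
    exact ⟨d, Or.inl hd₁, Or.inl hd₂⟩
  · have hv₁ : v₁ ≠ 0 := by rintro rfl; exact h (left_mem_segment ℝ _ _)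
    refine ⟨-v₁, Or.inl ?_, Or.inr ⟨ha₂, neg_ne_zero.2 hv₁⟩⟩
    simpa [inner_neg_right] using pow_pos (norm_pos_iff.2 hv₁) 2
  · have hv₂ : v₂ ≠ 0 := by rintro rfl; exact h (right_mem_segment ℝ _ _)
    refine ⟨-v₂, Or.inr ⟨ha₁, neg_ne_zero.2 hv₂⟩, Or.inl ?_⟩
    simpa [inner_neg_right] using pow_pos (norm_pos_iff.2 hv₂) 2
  · obtain ⟨d, hd⟩ := exists_ne (0 : X)
    exact ⟨d, Or.inr ⟨ha₁, hd⟩, Or.inr ⟨ha₂, hd⟩⟩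

theorem zero_mem_segment_of_inter_eq_empty [Nontrivial X] {φ₁ φ₂ : X → ℝ} {α a₁ a₂ c₁ c₂ : ℝ}
    {v₁ v₂ : X} (ha₁ : 0 ≤ a₁) (ha₂ : 0 ≤ a₂)
    (hφ₁ : ∀ x, φ₁ x = -a₁ * ‖x‖ ^ 2 + ⟪v₁, x⟫ + c₁)
    (hφ₂ : ∀ x, φ₂ x = -a₂ * ‖x‖ ^ 2 + ⟪v₂, x⟫ + c₂)
    (hip : {x : X | φ₁ x < α} ∩ {x : X | φ₂ x < α} = ∅) :
    ((0 : ℝ), (0 : X)) ∈ segment ℝ (a₁, v₁) (a₂, v₂) := by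
  by_contra h
  obtain ⟨d, hd₁, hd₂⟩ := exists_isDescentDir ha₁ ha₂ h
  have h₁ := (tendsto_smul_atBot_of_isDescentDir (c := c₁) ha₁ hd₁).eventually_lt_atBot α
  have h₂ := (tendsto_smul_atBot_of_isDescentDir (c := c₂) ha₂ hd₂).eventually_lt_atBot α
  obtain ⟨t, ht₁, ht₂⟩ := (h₁.and h₂).exists
  exact hip.subset ⟨(hφ₁ _).trans_lt ht₁, (hφ₂ _).trans_lt ht₂⟩

end

theorem stmt_14_general {X : Type*} [NormedAddCommGroup X] [InnerProductSpace ℝ X]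
    (f g : X → EReal)
    (hfdom : (PhiDom f).Nonempty) (hgdom : (PhiDom g).Nonempty)
    (α : ℝ) (φ₁ : X → ℝ) (hφ₁ : φ₁ ∈ PhiSupp f) (φ₂ : X → ℝ) (hφ₂ : φ₂ ∈ PhiSupp g)
    (hip : {x : X | φ₁ x < α} ∩ {x : X | φ₂ x < α} = ∅) :
    ∀ ε : ℝ, 0 < ε → ∃ x₁ ∈ PhiDom f, ∃ x₂ ∈ PhiDom g,
      ((0, 0) : ℝ × X) ∈ convexHull ℝ (SubLscE f ε x₁ ∪ SubLscE g ε x₂) := by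
  intro ε hε
  obtain ⟨⟨a₁, v₁, c₁, ha₁, hφ₁⟩, hφ₁f⟩ := hφ₁
  obtain ⟨⟨a₂, v₂, c₂, ha₂, hφ₂⟩, hφ₂g⟩ := hφ₂
  rcases subsingleton_or_nontrivial X with hX | hX
  · obtain ⟨x₁, hx₁, h₁⟩ := exists_mem_subLscE_of_minorant hfdom le_rfl (v := 0) (c := φ₁ 0)
      (fun x => by simpa [Subsingleton.elim x 0] using hφ₁f 0) hε
    exact ⟨x₁, hx₁, hgdom.some, hgdom.some_mem, subset_convexHull ℝ _ (Or.inl h₁)⟩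
  obtain ⟨x₁, hx₁, h₁⟩ := exists_mem_subLscE_of_minorant hfdom ha₁
    (fun x => hφ₁ x ▸ hφ₁f x) hε
  obtain ⟨x₂, hx₂, h₂⟩ := exists_mem_subLscE_of_minorant hgdom ha₂
    (fun x => hφ₂ x ▸ hφ₂g x) hε
  exact ⟨x₁, hx₁, x₂, hx₂, segment_subset_convexHull
    (Set.mem_union_left _ h₁) (Set.mem_union_right _ h₂)
    (zero_mem_segment_of_inter_eq_empty ha₁ ha₂ hφ₁ hφ₂ hip)⟩

/-- if some `φ₁ ∈ supp f`, `φ₂ ∈ supp g` have the intersection property at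
level `α`, then for every `ε > 0` the zero subgradient condition holds at some pair of
points of the domains. -/
theorem stmt_14 {X : Type*} [NormedAddCommGroup X] [InnerProductSpace ℝ X] [CompleteSpace X]
    (f g : X → EReal) (hfbot : ∀ x, f x ≠ ⊥) (hgbot : ∀ x, g x ≠ ⊥)
    (hfdom : (PhiDom f).Nonempty) (hgdom : (PhiDom g).Nonempty)
    (hfconv : PhiConvexOn f) (hgconv : PhiConvexOn g)
    (α : ℝ) (φ₁ : X → ℝ) (hφ₁ : φ₁ ∈ PhiSupp f) (φ₂ : X → ℝ) (hφ₂ : φ₂ ∈ PhiSupp g)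
    (hip : {x : X | φ₁ x < α} ∩ {x : X | φ₂ x < α} = ∅) :
    ∀ ε : ℝ, 0 < ε → ∃ x₁ ∈ PhiDom f, ∃ x₂ ∈ PhiDom g,
      ((0, 0) : ℝ × X) ∈ convexHull ℝ (SubLscE f ε x₁ ∪ SubLscE g ε x₂) :=
  stmt_14_general f g hfdom hgdom α φ₁ hφ₁ φ₂ hφ₂ hip
end
end

section
/- Let X be a real Hilbert space, Y a real vector space, and a : X×Y → ℝ∪{±∞} such that for every y ∈ Y the function a(·,y) : X → ℝ∪{+∞} is proper Φ_lsc-convex on X, and for every x ∈ X the function a(x,·) : Y → ℝ∪{±∞} is concave on Y. Then the following are equivalent: (i) for every α ∈ ℝ with α < inf_{x∈X} sup_{y∈Y} a(x,y), there exist y₁, y₂ ∈ Y and φ₁ ∈ supp(a(·,y₁)), φ₂ ∈ supp(a(·,y₂)) such that {x : φ₁(x) < α} ∩ {x : φ₂(x) < α} = ∅; (ii) sup_{y∈Y} inf_{x∈X} a(x,y) = inf_{x∈X} sup_{y∈Y} a(x,y). -/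
open scoped RealInnerProductSpace

noncomputable section

/-!
Fix `α` below `inf sup` and supports `φ₁, φ₂` with disjoint strict `α`-sublevel sets, so that
`max (φ₁ - α) (φ₂ - α) ≥ 0`. For functions `-a‖x‖² + ⟪v, x⟫ + c` this forces some convex
combination `t (φ₁ - α) + (1 - t) (φ₂ - α)` to be nonnegative: if neither function is nonnegative,
a positive quadratic coefficient would drive one of them to `-∞` along a ray on which the other
stays negative, so both are affine, and affine functions with disjoint negative half-spaces have
opposite normals. Concavity of `a (x, ·)` then gives `α ≤ inf_x a (x, t y₁ + (1 - t) y₂)`, whence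
`sup inf ≥ inf sup`. Conversely, for `α < sup inf` the constant `α` supports some `a (·, y)` and
has empty strict sublevel set.
-/

open Filter Set

section

variable {X : Type*} [NormedAddCommGroup X] [InnerProductSpace ℝ X]

def quadFun (a : ℝ) (v : X) (c : ℝ) (x : X) : ℝ := -a * ‖x‖ ^ 2 + ⟪v, x⟫ + c

lemma mem_PhiLsc_iff {φ : X → ℝ} : φ ∈ PhiLsc X ↔ ∃ a v c, 0 ≤ a ∧ φ = quadFun a v c := by
  simp only [PhiLsc, Set.mem_ofPred_eq, funext_iff, quadFun]

lemma quadFun_add_smul (a : ℝ) (v : X) (c : ℝ) (p w : X) (s : ℝ) :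
    quadFun a v c (p + s • w) =
      quadFun a v c p + s * ⟪v - (2 * a) • p, w⟫ - a * ‖w‖ ^ 2 * s ^ 2 := by
  simp only [quadFun, norm_add_sq_real, norm_smul, inner_add_right, inner_sub_left,
    real_inner_smul_left, real_inner_smul_right, mul_pow, Real.norm_eq_abs, sq_abs]
  ring

lemma tendsto_quadratic_atBot {A B C : ℝ} (hC : 0 < C) :
    Tendsto (fun s => A + s * B - C * s ^ 2) atTop atBot := by
  have hlin : Tendsto (fun s => B - C * s) atTop atBot :=
    tendsto_atBot_add_const_left _ B (tendsto_id.const_mul_atTop_of_neg (neg_neg_of_pos hC))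
      |>.congr fun s => by simp only [id]; ring
  exact (tendsto_atBot_add_const_left _ A (tendsto_id.atTop_mul_atBot₀ hlin)).congr
    fun s => by simp only [id]; ring

lemma quadFun_add_smul_le {a c s : ℝ} {v p w : X} (ha : 0 ≤ a)
    (hw : ⟪v - (2 * a) • p, w⟫ ≤ 0) (hs : 0 ≤ s) :
    quadFun a v c (p + s • w) ≤ quadFun a v c p := by
  rw [quadFun_add_smul]
  nlinarith [mul_nonpos_of_nonneg_of_nonpos hs hw,
    mul_nonneg (mul_nonneg ha (sq_nonneg ‖w‖)) (sq_nonneg s)]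

lemma tendsto_quadFun_add_smul_atBot {a c : ℝ} {v p w : X} (ha : 0 < a) (hw : w ≠ 0) :
    Tendsto (fun s : ℝ => quadFun a v c (p + s • w)) atTop atBot := by
  simp only [quadFun_add_smul]
  exact tendsto_quadratic_atBot (mul_pos ha (pow_pos (norm_pos_iff.2 hw) 2))

lemma exists_ne_zero_inner_nonpos [Nontrivial X] (u : X) : ∃ w ≠ 0, ⟪u, w⟫ ≤ 0 := by
  rcases eq_or_ne u 0 with rfl | hu
  · obtain ⟨w, hw⟩ := exists_ne (0 : X)
    exact ⟨w, hw, by simp⟩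
  · exact ⟨-u, neg_ne_zero.2 hu, by simp⟩

lemma quadFun_coeff_eq_zero_of_forall_nonneg_or [Nontrivial X] {a₁ a₂ c₁ c₂ : ℝ} {v₁ v₂ x₀ : X}
    (ha₁ : 0 ≤ a₁) (ha₂ : 0 ≤ a₂)
    (h : ∀ x, 0 ≤ quadFun a₁ v₁ c₁ x ∨ 0 ≤ quadFun a₂ v₂ c₂ x)
    (hx₀ : quadFun a₂ v₂ c₂ x₀ < 0) : a₁ = 0 := by
  -- On a ray from `x₀` along which the second function does not increase it stays negative,
  -- while the first one would tend to `-∞` if `a₁ > 0`.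
  obtain ⟨w, hw, hdesc⟩ := exists_ne_zero_inner_nonpos (v₂ - (2 * a₂) • x₀)
  by_contra ha
  have hlim := tendsto_quadFun_add_smul_atBot (c := c₁) (v := v₁) (p := x₀) (ha₁.lt_of_ne' ha) hw
  obtain ⟨s, hs₁, hs⟩ := ((hlim.eventually (eventually_lt_atBot 0)).and
    (eventually_ge_atTop 0)).exists
  have hs₂ := quadFun_add_smul_le (c := c₂) ha₂ hdesc hs
  rcases h (x₀ + s • w) with h | h <;> linarith

lemma inner_add_eq_half_norm_add_sq {u₁ u₂ : X} (h₁ : ‖u₁‖ = 1) (h₂ : ‖u₂‖ = 1) :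
    ⟪u₁, u₁ + u₂⟫ = ‖u₁ + u₂‖ ^ 2 / 2 := by
  rw [norm_add_sq_real, inner_add_right, real_inner_self_eq_norm_sq, h₁, h₂]
  ring

lemma tendsto_inner_smul_add_atBot {v d : X} (hd : ⟪v, d⟫ < 0) (c : ℝ) :
    Tendsto (fun s : ℝ => ⟪v, s • d⟫ + c) atTop atBot := by
  simp only [real_inner_smul_right]
  exact tendsto_atBot_add_const_right _ c (tendsto_id.atTop_mul_const_of_neg hd)

lemma exists_pos_eq_neg_smul_of_affine {v₁ v₂ : X} {c₁ c₂ : ℝ} (hv₁ : v₁ ≠ 0) (hv₂ : v₂ ≠ 0)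
    (h : ∀ x, 0 ≤ ⟪v₁, x⟫ + c₁ ∨ 0 ≤ ⟪v₂, x⟫ + c₂) : ∃ l : ℝ, 0 < l ∧ v₂ = -l • v₁ := by
  set u₁ := ‖v₁‖⁻¹ • v₁
  set u₂ := ‖v₂‖⁻¹ • v₂
  have hv₁u : v₁ = ‖v₁‖ • u₁ := by simp [u₁, smul_smul, hv₁]
  have hv₂u : v₂ = ‖v₂‖ • u₂ := by simp [u₂, smul_smul, hv₂]
  -- Unless the unit normals are opposite, `-(u₁ + u₂)` is a descent direction for both.
  by_cases hu : u₁ + u₂ = 0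
  · refine ⟨‖v₂‖ / ‖v₁‖, by positivity, ?_⟩
    conv_lhs => rw [hv₂u, eq_neg_of_add_eq_zero_right hu]
    simp only [u₁, smul_neg, neg_smul, smul_smul, div_eq_mul_inv]
  · have hu₁ : ‖u₁‖ = 1 := norm_smul_inv_norm hv₁
    have hu₂ : ‖u₂‖ = 1 := norm_smul_inv_norm hv₂
    have hpos : 0 < ‖u₁ + u₂‖ ^ 2 / 2 := by have := norm_pos_iff.2 hu; positivity
    have hd₁ : ⟪v₁, -(u₁ + u₂)⟫ < 0 := by
      rw [hv₁u, inner_neg_right, real_inner_smul_left, inner_add_eq_half_norm_add_sq hu₁ hu₂]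
      exact neg_neg_of_pos (mul_pos (norm_pos_iff.2 hv₁) hpos)
    have hd₂ : ⟪v₂, -(u₁ + u₂)⟫ < 0 := by
      rw [hv₂u, inner_neg_right, real_inner_smul_left, add_comm,
        inner_add_eq_half_norm_add_sq hu₂ hu₁, add_comm]
      exact neg_neg_of_pos (mul_pos (norm_pos_iff.2 hv₂) hpos)
    replace hd₁ := tendsto_inner_smul_add_atBot hd₁ c₁
    replace hd₂ := tendsto_inner_smul_add_atBot hd₂ c₂
    obtain ⟨s, hs₁, hs₂⟩ := ((hd₁.eventually (eventually_lt_atBot 0)).and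
      (hd₂.eventually (eventually_lt_atBot 0))).exists
    rcases h (s • -(u₁ + u₂)) with h | h <;> linarith

lemma exists_convex_comb_nonneg_of_affine {v₁ v₂ x₀ x₁ : X} {c₁ c₂ : ℝ}
    (h : ∀ x, 0 ≤ ⟪v₁, x⟫ + c₁ ∨ 0 ≤ ⟪v₂, x⟫ + c₂)
    (hx₁ : ⟪v₁, x₁⟫ + c₁ < 0) (hx₀ : ⟪v₂, x₀⟫ + c₂ < 0) :
    ∃ t ∈ Icc (0 : ℝ) 1, ∀ x, 0 ≤ t * (⟪v₁, x⟫ + c₁) + (1 - t) * (⟪v₂, x⟫ + c₂) := by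
  have hv₁ : v₁ ≠ 0 := by
    rintro rfl
    rcases h x₀ with h | h <;> simp only [inner_zero_left] at hx₁ h <;> linarith
  have hv₂ : v₂ ≠ 0 := by
    rintro rfl
    rcases h x₁ with h | h <;> simp only [inner_zero_left] at hx₀ h <;> linarith
  obtain ⟨l, hl, rfl⟩ := exists_pos_eq_neg_smul_of_affine hv₁ hv₂ h
  -- Now `l * (⟪v₁, x⟫ + c₁) + (⟪-l • v₁, x⟫ + c₂)` is the constant `l * c₁ + c₂`.
  have hc : 0 ≤ l * c₁ + c₂ := by
    by_contra! hc
    obtain ⟨r, hr₁, hr₂⟩ : ∃ r, c₂ / l < r ∧ r < -c₁ :=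
      exists_between ((div_lt_iff₀ hl).2 (by linarith))
    have hx : ⟪v₁, (r / ‖v₁‖ ^ 2) • v₁⟫ = r := by
      rw [real_inner_smul_right, real_inner_self_eq_norm_sq,
        div_mul_cancel₀ _ (by positivity)]
    rcases h ((r / ‖v₁‖ ^ 2) • v₁) with h | h
    · linarith
    · rw [real_inner_smul_left, hx] at h
      rw [div_lt_iff₀ hl] at hr₁
      linarith
  refine ⟨l / (1 + l), ⟨by positivity, (div_le_one (by positivity)).2 (by linarith)⟩, fun x => ?_⟩
  have : l / (1 + l) * (⟪v₁, x⟫ + c₁) + (1 - l / (1 + l)) * (⟪-l • v₁, x⟫ + c₂) =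
      (l * c₁ + c₂) / (1 + l) := by
    rw [real_inner_smul_left]
    field_simp
    ring
  rw [this]
  positivity

lemma exists_convex_comb_nonneg_of_quadFun {a₁ a₂ c₁ c₂ : ℝ} {v₁ v₂ : X} (ha₁ : 0 ≤ a₁)
    (ha₂ : 0 ≤ a₂) (h : ∀ x, 0 ≤ quadFun a₁ v₁ c₁ x ∨ 0 ≤ quadFun a₂ v₂ c₂ x) :
    ∃ t ∈ Icc (0 : ℝ) 1, ∀ x, 0 ≤ t * quadFun a₁ v₁ c₁ x + (1 - t) * quadFun a₂ v₂ c₂ x := by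
  by_cases h₂ : ∀ x, 0 ≤ quadFun a₂ v₂ c₂ x
  · exact ⟨0, ⟨le_rfl, zero_le_one⟩, fun x => by simpa using h₂ x⟩
  by_cases h₁ : ∀ x, 0 ≤ quadFun a₁ v₁ c₁ x
  · exact ⟨1, ⟨zero_le_one, le_rfl⟩, fun x => by simpa using h₁ x⟩
  push Not at h₁ h₂
  obtain ⟨x₁, hx₁⟩ := h₁
  obtain ⟨x₀, hx₀⟩ := h₂
  have : Nontrivial X := nontrivial_of_ne x₀ x₁ fun e => by
    subst e
    rcases h x₀ with h | h <;> linarith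
  obtain rfl := quadFun_coeff_eq_zero_of_forall_nonneg_or ha₁ ha₂ h hx₀
  obtain rfl := quadFun_coeff_eq_zero_of_forall_nonneg_or ha₂ le_rfl (fun x => (h x).symm) hx₁
  simp only [quadFun, neg_zero, zero_mul, zero_add] at h hx₀ hx₁ ⊢
  exact exists_convex_comb_nonneg_of_affine h hx₁ hx₀

lemma PhiLsc.exists_convex_comb_ge {φ₁ φ₂ : X → ℝ} (h₁ : φ₁ ∈ PhiLsc X) (h₂ : φ₂ ∈ PhiLsc X)
    {α : ℝ} (hdisj : {x | φ₁ x < α} ∩ {x | φ₂ x < α} = ∅) :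
    ∃ t ∈ Icc (0 : ℝ) 1, ∀ x, α ≤ t * φ₁ x + (1 - t) * φ₂ x := by
  obtain ⟨a₁, v₁, c₁, ha₁, rfl⟩ := mem_PhiLsc_iff.1 h₁
  obtain ⟨a₂, v₂, c₂, ha₂, rfl⟩ := mem_PhiLsc_iff.1 h₂
  have hsub : ∀ (a : ℝ) (v : X) (c : ℝ) (x : X),
      quadFun a v c x - α = quadFun a v (c - α) x := fun a v c x => by
    simp only [quadFun]; ring
  have h : ∀ x, 0 ≤ quadFun a₁ v₁ (c₁ - α) x ∨ 0 ≤ quadFun a₂ v₂ (c₂ - α) x := fun x => by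
    have hx := Set.eq_empty_iff_forall_notMem.1 hdisj x
    simp only [mem_inter_iff, mem_ofPred_eq, not_and_or, not_lt] at hx
    rwa [← hsub, ← hsub, sub_nonneg, sub_nonneg]
  obtain ⟨t, ht, hcomb⟩ := exists_convex_comb_nonneg_of_quadFun ha₁ ha₂ h
  refine ⟨t, ht, fun x => ?_⟩
  have := hcomb x
  rw [← hsub, ← hsub] at this
  linarith

lemma exists_convex_comb_ge_of_disjoint_sublevels {f₁ f₂ : X → EReal} {φ₁ φ₂ : X → ℝ}
    (hφ₁ : φ₁ ∈ PhiSupp f₁) (hφ₂ : φ₂ ∈ PhiSupp f₂) {α : ℝ}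
    (hdisj : {x | φ₁ x < α} ∩ {x | φ₂ x < α} = ∅) :
    ∃ t ∈ Icc (0 : ℝ) 1, ∀ x, (α : EReal) ≤ t * f₁ x + ((1 - t : ℝ) : EReal) * f₂ x := by
  obtain ⟨t, ⟨ht₀, ht₁⟩, hcomb⟩ := PhiLsc.exists_convex_comb_ge hφ₁.1 hφ₂.1 hdisj
  refine ⟨t, ⟨ht₀, ht₁⟩, fun x => ?_⟩
  calc (α : EReal) ≤ ((t * φ₁ x + (1 - t) * φ₂ x : ℝ) : EReal) := EReal.coe_le_coe (hcomb x)
    _ = t * φ₁ x + ((1 - t : ℝ) : EReal) * φ₂ x := by norm_cast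
    _ ≤ t * f₁ x + ((1 - t : ℝ) : EReal) * f₂ x := by
      gcongr
      exacts [hφ₁.2 x, hφ₂.2 x]

lemma const_mem_PhiSupp {f : X → EReal} {α : ℝ} (h : ∀ x, (α : EReal) ≤ f x) :
    (fun _ => α) ∈ PhiSupp f :=
  ⟨⟨0, 0, α, le_rfl, fun x => by simp⟩, h⟩

end

theorem stmt_15_general {X : Type*} [NormedAddCommGroup X] [InnerProductSpace ℝ X]
    {Y : Type*} [AddCommGroup Y] [Module ℝ Y]
    (a : X × Y → EReal)
    (hconc : ∀ x : X, ∀ y₁ y₂ : Y, ∀ t ∈ Set.Icc (0 : ℝ) 1,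
      (t : EReal) * a (x, y₁) + ((1 - t : ℝ) : EReal) * a (x, y₂) ≤
        a (x, t • y₁ + (1 - t) • y₂)) :
    ((∀ α : ℝ, (α : EReal) < ⨅ x : X, ⨆ y : Y, a (x, y) →
        ∃ y₁ y₂ : Y, ∃ φ₁ ∈ PhiSupp (fun x => a (x, y₁)), ∃ φ₂ ∈ PhiSupp (fun x => a (x, y₂)),
          {x : X | φ₁ x < α} ∩ {x : X | φ₂ x < α} = ∅) ↔
      (⨆ y : Y, ⨅ x : X, a (x, y)) = ⨅ x : X, ⨆ y : Y, a (x, y)) := by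
  constructor
  · intro h
    refine le_antisymm (iSup_iInf_le_iInf_iSup _) (EReal.ge_of_forall_gt_iff_ge.1 fun α hα => ?_)
    obtain ⟨y₁, y₂, φ₁, hφ₁, φ₂, hφ₂, hdisj⟩ := h α hα
    obtain ⟨t, ht, hcomb⟩ := exists_convex_comb_ge_of_disjoint_sublevels hφ₁ hφ₂ hdisj
    exact le_iSup_of_le (t • y₁ + (1 - t) • y₂)
      (le_iInf fun x => (hcomb x).trans (hconc x y₁ y₂ t ht))
  · intro heq α hα
    rw [← heq] at hα
    obtain ⟨y, hy⟩ := lt_iSup_iff.1 hα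
    have hα_mem := const_mem_PhiSupp fun x => hy.le.trans (iInf_le (fun x => a (x, y)) x)
    exact ⟨y, y, _, hα_mem, _, hα_mem, by simp⟩

/-- the general minimax theorem — the intersection property on supports at
every level `α` below `inf sup` is equivalent to the minimax equality. -/
theorem stmt_15 {X : Type*} [NormedAddCommGroup X] [InnerProductSpace ℝ X] [CompleteSpace X]
    {Y : Type*} [AddCommGroup Y] [Module ℝ Y]
    (a : X × Y → EReal)
    (hconv : ∀ y : Y, PhiConvexOn (fun x => a (x, y)))
    (hsupp : ∀ y : Y, (PhiSupp (fun x => a (x, y))).Nonempty)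
    (hdom : ∀ y : Y, (PhiDom (fun x => a (x, y))).Nonempty)
    (hconc : ∀ x : X, ∀ y₁ y₂ : Y, ∀ t ∈ Set.Icc (0 : ℝ) 1,
      (t : EReal) * a (x, y₁) + ((1 - t : ℝ) : EReal) * a (x, y₂) ≤
        a (x, t • y₁ + (1 - t) • y₂)) :
    ((∀ α : ℝ, (α : EReal) < ⨅ x : X, ⨆ y : Y, a (x, y) →
        ∃ y₁ y₂ : Y, ∃ φ₁ ∈ PhiSupp (fun x => a (x, y₁)), ∃ φ₂ ∈ PhiSupp (fun x => a (x, y₂)),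
          {x : X | φ₁ x < α} ∩ {x : X | φ₂ x < α} = ∅) ↔
      (⨆ y : Y, ⨅ x : X, a (x, y)) = ⨅ x : X, ⨆ y : Y, a (x, y)) :=
  stmt_15_general a hconc
end
end
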